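/- arXiv:1406.6809 — 15 statements merged into one kernel-verified Lean document; each statement's English description precedes it below -/
import Mathlib

section
/- Let n be a nonsquare positive integer, and let k, k', m be positive integers with k² < n and m² − n = ε·k·k' where ε = 1 or ε = −1. Then the following three conditions are equivalent: (1) m is best mod k; (2) 4k'² + k² ≤ 4n; (3) 2m ≥ 2k' + εk. -/
/-!
Along a residue class mod `k` of positive integers, `|x² − n|` first decreases and then
increases, so `m` is best mod `k` exactly when it is no worse than its neighbour on the side
of `√n`: the lower neighbour `m − k` if `m² > n`, the upper neighbour `m + k` if `m² < n`.
With `m² − n = ε k k'` this comparison is the linear condition `2m ≥ 2k' + εk`, and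
`4n − 4k'² − k² = (2m)² − (2k' + εk)²` turns it into `4k'² + k² ≤ 4n`.
-/

/-- `m` is a best representative of its congruence class mod `k`:
`|m² − n|` is minimal among positive `m'` congruent to `m` mod `k`. -/
def IsBest (n k m : ℤ) : Prop :=
  ∀ m' : ℤ, 0 < m' → m' ≡ m [ZMOD k] → |m ^ 2 - n| ≤ |m' ^ 2 - n|

lemma Int.ModEq.le_sub_of_lt {k a b : ℤ} (h : a ≡ b [ZMOD k]) (hab : a < b) :
    a ≤ b - k := by
  have : k ≤ b - a := Int.le_of_dvd (by omega) h.dvd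
  omega

namespace IsBest

variable {n k m : ℤ}

theorem iff_of_le_sq (hk : 0 < k) (hkm : k < m) (hmn : n ≤ m ^ 2) :
    IsBest n k m ↔ m ^ 2 - n ≤ n - (m - k) ^ 2 := by
  have hlower : (m - k) ^ 2 < m ^ 2 := by nlinarith
  constructor
  · intro hbest
    have h := hbest (m - k) (by omega) (Int.modEq_iff_dvd.mpr ⟨1, by ring⟩)
    rw [abs_of_nonneg (sub_nonneg.mpr hmn)] at h
    rcases abs_cases ((m - k) ^ 2 - n) with ⟨habs, _⟩ | ⟨habs, _⟩ <;> rw [habs] at h <;> linarith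
  · intro hcmp m' hm' hcong
    rw [abs_of_nonneg (sub_nonneg.mpr hmn)]
    rcases lt_or_ge m' m with hlt | hge
    · have hle : m' ≤ m - k := hcong.le_sub_of_lt hlt
      have : m' ^ 2 ≤ (m - k) ^ 2 := pow_le_pow_left₀ hm'.le hle 2
      exact le_trans (by linarith) (neg_le_abs _)
    · have : m ^ 2 ≤ m' ^ 2 := pow_le_pow_left₀ (by omega) hge 2
      exact le_trans (by linarith) (le_abs_self _)

theorem iff_of_sq_le (hk : 0 < k) (hm : 0 < m) (hmn : m ^ 2 ≤ n) :
    IsBest n k m ↔ n - m ^ 2 ≤ (m + k) ^ 2 - n := by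
  have hupper : m ^ 2 < (m + k) ^ 2 := by nlinarith
  constructor
  · intro hbest
    have h := hbest (m + k) (by omega) (Int.modEq_iff_dvd.mpr ⟨-1, by ring⟩)
    rw [abs_of_nonpos (sub_nonpos.mpr hmn)] at h
    rcases abs_cases ((m + k) ^ 2 - n) with ⟨habs, _⟩ | ⟨habs, _⟩ <;> rw [habs] at h <;> linarith
  · intro hcmp m' hm' hcong
    rw [abs_of_nonpos (sub_nonpos.mpr hmn)]
    rcases le_or_gt m' m with hle | hgt
    · have : m' ^ 2 ≤ m ^ 2 := pow_le_pow_left₀ hm'.le hle 2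
      exact le_trans (by linarith) (neg_le_abs _)
    · have hge : m + k ≤ m' := by linarith [hcong.symm.le_sub_of_lt hgt]
      have : (m + k) ^ 2 ≤ m' ^ 2 := pow_le_pow_left₀ (by omega) hge 2
      exact le_trans (by linarith) (le_abs_self _)

end IsBest

variable {n k k' m ε : ℤ}

theorem isBest_iff_of_sq_sub_eq_mul (hk : 0 < k) (hk' : 0 ≤ k') (hm : 0 < m) (hkn : k ^ 2 < n)
    (heq : m ^ 2 - n = k * k') : IsBest n k m ↔ 2 * k' + k ≤ 2 * m := by
  have hkm : k < m := lt_of_pow_lt_pow_left₀ 2 hm.le (by nlinarith [mul_nonneg hk.le hk'])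
  rw [IsBest.iff_of_le_sq hk hkm (by nlinarith)]
  constructor <;> intro h <;> nlinarith

theorem isBest_iff_of_sub_sq_eq_mul (hk : 0 < k) (hk' : 0 ≤ k') (hm : 0 < m)
    (heq : n - m ^ 2 = k * k') : IsBest n k m ↔ 2 * k' ≤ 2 * m + k := by
  rw [IsBest.iff_of_sq_le hk hm (by nlinarith)]
  constructor <;> intro h <;> nlinarith

theorem four_mul_sq_add_sq_le_iff (hk : 0 < k) (hk' : 0 ≤ k') (hm : 0 < m) (hkn : k ^ 2 < n)
    (hε : ε = 1 ∨ ε = -1) (heq : m ^ 2 - n = ε * (k * k')) :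
    4 * k' ^ 2 + k ^ 2 ≤ 4 * n ↔ 2 * k' + ε * k ≤ 2 * m := by
  have hε2 : ε ^ 2 = 1 := by rcases hε with rfl | rfl <;> norm_num
  have hdiff : 4 * n - (4 * k' ^ 2 + k ^ 2) = (2 * m) ^ 2 - (2 * k' + ε * k) ^ 2 := by
    linear_combination (-4) * heq + k ^ 2 * hε2
  rw [← sub_nonneg, hdiff, sub_nonneg]
  constructor
  · intro h
    exact (abs_le_of_sq_le_sq' h (by omega)).2
  · intro h
    -- the lower bound is only at stake when `ε = -1`, and `k² < n` supplies it
    refine sq_le_sq' ?_ h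
    rcases hε with rfl | rfl <;> nlinarith

theorem stmt_0_general (n k k' m ε : ℤ)
    (hk : 0 < k) (hk' : 0 < k') (hm : 0 < m) (hkn : k ^ 2 < n)
    (hε : ε = 1 ∨ ε = -1) (heq : m ^ 2 - n = ε * (k * k')) :
    (IsBest n k m ↔ 4 * k' ^ 2 + k ^ 2 ≤ 4 * n) ∧
    (IsBest n k m ↔ 2 * m ≥ 2 * k' + ε * k) := by
  have hbest : IsBest n k m ↔ 2 * m ≥ 2 * k' + ε * k := by
    rcases hε with rfl | rfl
    · simpa only [one_mul, ge_iff_le] using isBest_iff_of_sq_sub_eq_mul hk hk'.le hm hkn (by linarith)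
    · rw [isBest_iff_of_sub_sq_eq_mul hk hk'.le hm (by linarith)]
      constructor <;> intro h <;> linarith
  exact ⟨hbest.trans (four_mul_sq_add_sq_le_iff hk hk'.le hm hkn hε heq).symm, hbest⟩

theorem stmt_0 (n k k' m ε : ℤ) (hn : 0 < n) (hns : ¬ IsSquare n)
    (hk : 0 < k) (hk' : 0 < k') (hm : 0 < m) (hkn : k ^ 2 < n)
    (hε : ε = 1 ∨ ε = -1) (heq : m ^ 2 - n = ε * (k * k')) :
    (IsBest n k m ↔ 4 * k' ^ 2 + k ^ 2 ≤ 4 * n) ∧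
    (IsBest n k m ↔ 2 * m ≥ 2 * k' + ε * k) :=
  stmt_0_general n k k' m ε hk hk' hm hkn hε heq
end

section
/- Let n be a nonsquare positive integer, and let k, k', m be positive integers with k² < n and m² − n = ε·k·k' where ε = 1 or ε = −1. Then the following three conditions are equivalent: (1) m is strictly best mod k; (2) 4k'² + k² < 4n; (3) 2m > 2k' + εk. -/
/-! Since `x ↦ |x² − n|` is decreasing and then increasing on `x ≥ 0`, `m` is strictly best mod `k`
as soon as it beats its two neighbours `m ± k` in the class. With `m² − n = ε k k'` these
neighbours give `(m ± k)² − n = k (ε k' ± 2m + k)`, and comparing with `|m² − n| = k k'` leaves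
exactly one nontrivial inequality, `2m > 2k' + εk`. Squaring it and substituting `m²` turns it
into `4k'² + k² < 4n`. -/

/-- `m` is a strictly best representative of its congruence class mod `k`:
`|m² − n| < |m'² − n|` for every positive `m' ≠ m` congruent to `m` mod `k`. -/
def IsStrictBest (n k m : ℤ) : Prop :=
  ∀ m' : ℤ, 0 < m' → m' ≡ m [ZMOD k] → m' ≠ m → |m ^ 2 - n| < |m' ^ 2 - n|

lemma abs_sq_sub_le_max {a b c : ℤ} (n : ℤ) (ha : 0 ≤ a) (hab : a ≤ b) (hbc : b ≤ c) :
    |b ^ 2 - n| ≤ max |a ^ 2 - n| |c ^ 2 - n| :=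
  abs_le_max_abs_abs (by gcongr) (by gcongr; linarith)

lemma isStrictBest_iff_neighbours {n k m : ℤ} (hk : 0 < k) (hm : 0 < m) :
    IsStrictBest n k m ↔
      (0 < m - k → |m ^ 2 - n| < |(m - k) ^ 2 - n|) ∧ |m ^ 2 - n| < |(m + k) ^ 2 - n| := by
  constructor
  · intro hbest
    exact ⟨fun hmk ↦ hbest _ hmk (Int.modEq_iff_dvd.mpr ⟨1, by ring⟩) (by omega),
      hbest _ (by omega) (Int.modEq_iff_dvd.mpr ⟨-1, by ring⟩) (by omega)⟩
  · rintro ⟨hlower, hupper⟩ m' hm' hmod hne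
    obtain ⟨c, hc⟩ := Int.modEq_iff_dvd.mp hmod
    rcases lt_trichotomy c 0 with hc0 | rfl | hc0
    · have hle : m + k ≤ m' := by nlinarith
      have := le_max_iff.mp (abs_sq_sub_le_max n hm.le (by omega) hle)
      exact hupper.trans_le (this.resolve_left hupper.not_ge)
    · omega
    · have hle : m' ≤ m - k := by nlinarith
      have := le_max_iff.mp (abs_sq_sub_le_max n hm'.le hle (sub_le_self m hk.le))
      exact (hlower (by omega)).trans_le (this.resolve_right (hlower (by omega)).not_ge)

lemma isStrictBest_iff_of_sq_sub_eq_mul {n k k' m : ℤ} (hk : 0 < k) (hk' : 0 < k') (hm : 0 < m)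
    (hkn : k ^ 2 < n) (heq : m ^ 2 - n = k * k') :
    IsStrictBest n k m ↔ 2 * k' + k < 2 * m := by
  have hkm : k < m := by nlinarith
  rw [isStrictBest_iff_neighbours hk hm,
    show (m - k) ^ 2 - n = k * (k' + k - 2 * m) by linear_combination heq,
    show (m + k) ^ 2 - n = k * (k' + k + 2 * m) by linear_combination heq,
    heq]
  simp only [abs_mul, abs_of_pos hk, abs_of_pos hk', mul_lt_mul_iff_right₀ hk, lt_abs]
  omega

lemma isStrictBest_iff_of_sq_sub_eq_neg_mul {n k k' m : ℤ} (hk : 0 < k) (hk' : 0 < k')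
    (hm : 0 < m) (heq : m ^ 2 - n = -(k * k')) :
    IsStrictBest n k m ↔ 2 * k' - k < 2 * m := by
  rw [isStrictBest_iff_neighbours hk hm,
    show (m - k) ^ 2 - n = k * (k - k' - 2 * m) by linear_combination heq,
    show (m + k) ^ 2 - n = k * (k - k' + 2 * m) by linear_combination heq,
    heq, abs_neg]
  simp only [abs_mul, abs_of_pos hk, abs_of_pos hk', mul_lt_mul_iff_right₀ hk, lt_abs]
  omega

lemma four_mul_sq_add_sq_lt_iff {n k k' m ε : ℤ} (hm : 0 < m) (hε : ε ^ 2 = 1)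
    (heq : m ^ 2 - n = ε * (k * k')) (hlow : -(2 * m) < 2 * k' + ε * k) :
    4 * k' ^ 2 + k ^ 2 < 4 * n ↔ 2 * k' + ε * k < 2 * m := by
  have hsq : (2 * k' + ε * k) ^ 2 = 4 * k' ^ 2 + k ^ 2 + 4 * ε * k * k' := by
    linear_combination k ^ 2 * hε
  rw [show 4 * n = (2 * m) ^ 2 - 4 * ε * k * k' by linear_combination -4 * heq]
  constructor
  · intro h
    exact (abs_lt_of_sq_lt_sq' (by linarith) (by positivity)).2
  · intro h
    linarith [sq_lt_sq' hlow h]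

theorem stmt_1_general (n k k' m ε : ℤ)
    (hk : 0 < k) (hk' : 0 < k') (hm : 0 < m) (hkn : k ^ 2 < n)
    (hε : ε = 1 ∨ ε = -1) (heq : m ^ 2 - n = ε * (k * k')) :
    (IsStrictBest n k m ↔ 4 * k' ^ 2 + k ^ 2 < 4 * n) ∧
    (IsStrictBest n k m ↔ 2 * m > 2 * k' + ε * k) := by
  have hbest : IsStrictBest n k m ↔ 2 * k' + ε * k < 2 * m := by
    rcases hε with rfl | rfl
    · simpa using isStrictBest_iff_of_sq_sub_eq_mul hk hk' hm hkn (by simpa using heq)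
    · simpa [← sub_eq_add_neg] using
        isStrictBest_iff_of_sq_sub_eq_neg_mul hk hk' hm (by simpa using heq)
  -- for `ε = -1` this is `k < 2m + 2k'`, forced by `k² < n = m² + kk'`
  have hlow : -(2 * m) < 2 * k' + ε * k := by
    rcases hε with rfl | rfl <;> nlinarith
  have hε2 : ε ^ 2 = 1 := by rcases hε with rfl | rfl <;> norm_num
  exact ⟨hbest.trans (four_mul_sq_add_sq_lt_iff hm hε2 heq hlow).symm, hbest⟩

theorem stmt_1 (n k k' m ε : ℤ) (hn : 0 < n) (hns : ¬ IsSquare n)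
    (hk : 0 < k) (hk' : 0 < k') (hm : 0 < m) (hkn : k ^ 2 < n)
    (hε : ε = 1 ∨ ε = -1) (heq : m ^ 2 - n = ε * (k * k')) :
    (IsStrictBest n k m ↔ 4 * k' ^ 2 + k ^ 2 < 4 * n) ∧
    (IsStrictBest n k m ↔ 2 * m > 2 * k' + ε * k) :=
  stmt_1_general n k k' m ε hk hk' hm hkn hε heq
end

section
/- Let n be a nonsquare positive integer and let (k, m, k') be a step, i.e. k, m, k' are positive integers with k² < n, |m² − n| = k·k', and m best mod k. Then k'² < n. -/
/-- `(k, m, k')` is a step. -/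
def IsStep (n k m k' : ℤ) : Prop :=
  0 < k ∧ 0 < m ∧ 0 < k' ∧ k ^ 2 < n ∧ |m ^ 2 - n| = k * k' ∧ IsBest n k m

section OrderedRing

variable {α : Type*} [CommRing α] [LinearOrder α] [IsStrictOrderedRing α]

theorem two_mul_le_add_of_abs_sub_le_abs_sub {a b x : α} (hab : a < b)
    (h : |a - x| ≤ |b - x|) : 2 * x ≤ a + b := by
  rcases abs_cases (a - x) with ⟨ha, ha'⟩ | ⟨ha, ha'⟩ <;>
    rcases abs_cases (b - x) with ⟨hb, hb'⟩ | ⟨hb, hb'⟩ <;> linarith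

theorem add_le_two_mul_of_abs_sub_le_abs_sub {a b x : α} (hba : b < a)
    (h : |a - x| ≤ |b - x|) : a + b ≤ 2 * x := by
  rcases abs_cases (a - x) with ⟨ha, ha'⟩ | ⟨ha, ha'⟩ <;>
    rcases abs_cases (b - x) with ⟨hb, hb'⟩ | ⟨hb, hb'⟩ <;> linarith

theorem sq_lt_sq_add_mul_of_two_mul_le {k k' m : α} (hk : 0 < k) (hk' : 0 < k')
    (h : 2 * k' ≤ 2 * m + k) : k' ^ 2 < m ^ 2 + k * k' := by
  rcases lt_or_ge k' k with hlt | hge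
  · nlinarith
  · nlinarith

theorem sq_lt_sq_sub_mul_of_two_mul_add_le {k k' m : α} (hk : 0 < k) (hk' : 0 ≤ k')
    (h : 2 * k' + k ≤ 2 * m) : k' ^ 2 < m ^ 2 - k * k' := by
  nlinarith

end OrderedRing

namespace IsBest

variable {n k m : ℤ}

theorem abs_le_add (h : IsBest n k m) (hmk : 0 < m + k) : |m ^ 2 - n| ≤ |(m + k) ^ 2 - n| :=
  h _ hmk Int.add_modEq_right

theorem abs_le_sub (h : IsBest n k m) (hmk : 0 < m - k) : |m ^ 2 - n| ≤ |(m - k) ^ 2 - n| :=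
  h _ hmk (Int.modEq_iff_dvd.mpr ⟨1, by ring⟩)

theorem sq_lt_of_eq_sq_add_mul {k' : ℤ} (h : IsBest n k m) (hk : 0 < k) (hm : 0 < m)
    (hk' : 0 < k') (hn : n = m ^ 2 + k * k') : k' ^ 2 < n := by
  have hmid := two_mul_le_add_of_abs_sub_le_abs_sub (by nlinarith) (h.abs_le_add (by omega))
  have : 2 * k' ≤ 2 * m + k := le_of_mul_le_mul_left (by nlinarith) hk
  exact hn ▸ sq_lt_sq_add_mul_of_two_mul_le hk hk' this

theorem sq_lt_of_eq_sq_sub_mul {k' : ℤ} (h : IsBest n k m) (hk : 0 < k) (hkm : k < m)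
    (hk' : 0 < k') (hn : n = m ^ 2 - k * k') : k' ^ 2 < n := by
  have hmid := add_le_two_mul_of_abs_sub_le_abs_sub (by nlinarith) (h.abs_le_sub (by omega))
  have : 2 * k' + k ≤ 2 * m := le_of_mul_le_mul_left (by nlinarith) hk
  exact hn ▸ sq_lt_sq_sub_mul_of_two_mul_add_le hk hk'.le this

end IsBest

theorem stmt_2_general (n k m k' : ℤ) (hstep : IsStep n k m k') :
    k' ^ 2 < n := by
  obtain ⟨hk, hm, hk', hkn, habs, hbest⟩ := hstep
  rcases lt_trichotomy (m ^ 2) n with hlt | heq | hgt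
  · refine hbest.sq_lt_of_eq_sq_add_mul hk hm hk' ?_
    rw [abs_of_neg (sub_neg.mpr hlt)] at habs
    linarith
  · rw [heq, sub_self, abs_zero] at habs
    nlinarith
  · refine hbest.sq_lt_of_eq_sq_sub_mul hk ?_ hk' ?_
    · exact lt_of_pow_lt_pow_left₀ 2 hm.le (hkn.trans hgt)
    · rw [abs_of_pos (sub_pos.mpr hgt)] at habs
      linarith

theorem stmt_2 (n k m k' : ℤ) (hn : 0 < n) (hns : ¬ IsSquare n)
    (hstep : IsStep n k m k') :
    k' ^ 2 < n :=
  stmt_2_general n k m k' hstep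
end

section
/- Let n be a nonsquare positive integer and let (k, m, k') be a step with k' ≥ k. Then the step is reduced, i.e. m is also best mod k'. -/
section

variable {n k m k' : ℤ}

theorem IsBest.two_mul_add_le_of_sq_sub_eq (hbest : IsBest n k m) (hk : 0 < k) (hk' : 0 < k')
    (hm : 0 < m) (hkn : k ^ 2 < n) (hE : m ^ 2 - n = k * k') : 2 * k' + k ≤ 2 * m := by
  have hkm : k < m := by nlinarith
  have h := hbest (m - k) (by linarith) (Int.modEq_iff_add_fac.mpr ⟨1, by ring⟩)
  rw [hE, show (m - k) ^ 2 - n = k * (k' + k - 2 * m) by linear_combination hE,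
    abs_of_pos (mul_pos hk hk'), abs_mul, abs_of_pos hk] at h
  rcases le_abs'.mp (le_of_mul_le_mul_left h hk) with h | h <;> omega

theorem IsBest.two_mul_le_add_of_sq_sub_eq_neg (hbest : IsBest n k m) (hk : 0 < k)
    (hk' : 0 < k') (hm : 0 < m) (hE : m ^ 2 - n = -(k * k')) : 2 * k' ≤ 2 * m + k := by
  have h := hbest (m + k) (by linarith) (Int.modEq_iff_add_fac.mpr ⟨-1, by ring⟩)
  rw [hE, show (m + k) ^ 2 - n = k * (2 * m + k - k') by linear_combination hE, abs_neg,
    abs_of_pos (mul_pos hk hk'), abs_mul, abs_of_pos hk] at h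
  rcases le_abs'.mp (le_of_mul_le_mul_left h hk) with h | h <;> omega

theorem isBest_of_sq_sub_eq (hk : 0 < k) (hkk' : k ≤ k') (hE : m ^ 2 - n = k * k')
    (hm : 2 * k' + k ≤ 2 * m) : IsBest n k' m := by
  intro m' hm' hmod
  obtain ⟨j, rfl⟩ := Int.modEq_iff_add_fac.mp hmod.symm
  have hk' : 0 < k' := hk.trans_le hkk'
  rw [hE, show (m + k' * j) ^ 2 - n = k' * (k + j * (2 * m + k' * j)) by linear_combination hE,
    abs_of_pos (mul_pos hk hk'), abs_mul, abs_of_pos hk', mul_comm]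
  refine mul_le_mul_of_nonneg_left (le_abs'.mpr ?_) hk'.le
  rcases le_or_gt 0 j with hj | hj
  · right
    nlinarith
  · left
    -- with `t = -j ≥ 1`: `t (2m - k' t) - (2m - k') = (t - 1) (2m - k' (t + 1)) ≥ 0`
    have : 0 ≤ 2 * m + k' * (j - 1) := by nlinarith
    nlinarith [mul_nonneg (show 0 ≤ -j - 1 by omega) this]

theorem isBest_of_sq_sub_eq_neg (hk : 0 < k) (hkk' : k ≤ k') (hE : m ^ 2 - n = -(k * k'))
    (hm : 2 * k' ≤ 2 * m + k) : IsBest n k' m := by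
  intro m' hm' hmod
  obtain ⟨j, rfl⟩ := Int.modEq_iff_add_fac.mp hmod.symm
  have hk' : 0 < k' := hk.trans_le hkk'
  rw [hE, show (m + k' * j) ^ 2 - n = k' * (-k + j * (2 * m + k' * j)) by linear_combination hE,
    abs_neg, abs_of_pos (mul_pos hk hk'), abs_mul, abs_of_pos hk', mul_comm]
  refine mul_le_mul_of_nonneg_left (le_abs'.mpr ?_) hk'.le
  rcases le_or_gt j 0 with hj | hj
  · left
    nlinarith
  · right
    -- `j (2m + k' j) - (2m + k') = (j - 1) (2m + k' (j + 1)) ≥ 0`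
    have : 0 ≤ 2 * m + k' * (j + 1) := by nlinarith
    nlinarith [mul_nonneg (show 0 ≤ j - 1 by omega) this]

end

theorem stmt_3_general (n k m k' : ℤ)
    (hstep : IsStep n k m k') (hkk' : k ≤ k') :
    IsBest n k' m := by
  obtain ⟨hk, hm, hk', hkn, habs, hbest⟩ := hstep
  rcases (abs_eq (mul_pos hk hk').le).mp habs with hE | hE
  · exact isBest_of_sq_sub_eq hk hkk' hE (hbest.two_mul_add_le_of_sq_sub_eq hk hk' hm hkn hE)
  · exact isBest_of_sq_sub_eq_neg hk hkk' hE (hbest.two_mul_le_add_of_sq_sub_eq_neg hk hk' hm hE)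

theorem stmt_3 (n k m k' : ℤ) (hn : 0 < n) (hns : ¬ IsSquare n)
    (hstep : IsStep n k m k') (hkk' : k ≤ k') :
    IsBest n k' m :=
  stmt_3_general n k m k' hstep hkk'
end

section
/- Let n be a nonsquare positive integer and let k, k', k'', m, m' be positive integers such that k² < n, k·k' = |m² − n|, k'·k'' = |m'² − n|, and k' divides m + m'. If 4k'² + k² ≤ 4n and 4k''² + k'² ≤ 4n, then 4k'² + k''² ≤ 4n. -/
/-!
Suppose the conclusion fails. Against the two hypotheses this gives `k < k'' < k'`; then
`m² - n ≤ k k'` and `m'² - n ≤ k' k''` force `m, m' < 3k'/2`, so `m + m' = t k'` with `t ∈ {1, 2}`.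
Write `m² - n = a k'` and `m'² - n = b k'` with `a = ±k`, `b = ±k''`. Subtracting, `t (m - m') = a - b`,
which together with `m + m' = t k'` determines `m`, hence `4t²n = (t²k' + a - b)² - 4t²ak'`.
In each of the eight cases this value of `n` violates `4k'² + k² ≤ 4n` or the failed conclusion:
written in the positive quantities `k`, `k'' - k`, `k' - k''`, the relevant difference is a
quadratic form all of whose coefficients have the same sign.
-/

lemma exists_eq_mul_of_mul_eq_abs {x k k' : ℤ} (hk : 0 ≤ k) (hk' : 0 ≤ k')
    (h : k * k' = |x|) : ∃ a, (a = k ∨ a = -k) ∧ x = a * k' := by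
  rcases (abs_eq (mul_nonneg hk hk')).1 h.symm with hx | hx
  · exact ⟨k, .inl rfl, hx⟩
  · exact ⟨-k, .inr rfl, by rw [hx, neg_mul]⟩

lemma two_mul_lt_three_mul_of_sq_sub_le {x n k' j : ℤ} (hk' : 0 < k') (hj : j < k')
    (hx : x ^ 2 - n ≤ j * k') (hn : 4 * n < 5 * k' ^ 2) : 2 * x < 3 * k' :=
  lt_of_pow_lt_pow_left₀ 2 (by positivity) (by nlinarith)

lemma eq_one_or_eq_two_of_add_eq_mul {m m' k' t : ℤ} (hk' : 0 < k') (hpos : 0 < m + m')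
    (hm : 2 * m < 3 * k') (hm' : 2 * m' < 3 * k') (h : m + m' = k' * t) : t = 1 ∨ t = 2 := by
  have ht_pos : 0 < t := pos_of_mul_pos_right (h ▸ hpos) hk'.le
  have ht_lt : t < 3 := lt_of_mul_lt_mul_left (by linarith) hk'.le
  omega

lemma mul_sub_eq_sub_of_sq_sub_eq {R : Type*} [CommRing R] [IsDomain R] {n m m' k' a b t : R}
    (hk' : k' ≠ 0) (hm : m ^ 2 - n = a * k') (hm' : m' ^ 2 - n = b * k')
    (hsum : m + m' = k' * t) : t * (m - m') = a - b :=
  mul_left_cancel₀ hk' (by linear_combination (m' - m) * hsum + hm - hm')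

lemma four_mul_sq_mul_eq {R : Type*} [CommRing R] {n m m' k' a b t : R}
    (hm : m ^ 2 - n = a * k') (hsum : m + m' = k' * t) (hdiff : t * (m - m') = a - b) :
    4 * t ^ 2 * n = (t ^ 2 * k' + a - b) ^ 2 - 4 * t ^ 2 * a * k' := by
  linear_combination (-(4 * t ^ 2)) * hm + (2 * t * m + t ^ 2 * k' + a - b) * (t * hsum + hdiff)

theorem stmt_4_general (n k k' k'' m m' : ℤ)
    (hk : 0 < k) (hk' : 0 < k') (hk'' : 0 < k'') (hm : 0 < m) (hm' : 0 < m')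
    (heq1 : k * k' = |m ^ 2 - n|) (heq2 : k' * k'' = |m' ^ 2 - n|)
    (hdvd : k' ∣ m + m')
    (h1 : 4 * k' ^ 2 + k ^ 2 ≤ 4 * n) (h2 : 4 * k'' ^ 2 + k' ^ 2 ≤ 4 * n) :
    4 * k' ^ 2 + k'' ^ 2 ≤ 4 * n := by
  by_contra! hcon
  have hkk'' : k < k'' := lt_of_pow_lt_pow_left₀ 2 hk''.le (by linarith)
  have hk''k' : k'' < k' := lt_of_pow_lt_pow_left₀ 2 hk'.le (by linarith)
  have h5 : 4 * n < 5 * k' ^ 2 := by nlinarith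
  obtain ⟨t, ht⟩ := hdvd
  have ht12 : t = 1 ∨ t = 2 := eq_one_or_eq_two_of_add_eq_mul hk' (add_pos hm hm')
    (two_mul_lt_three_mul_of_sq_sub_le hk' (hkk''.trans hk''k') (heq1 ▸ le_abs_self _) h5)
    (two_mul_lt_three_mul_of_sq_sub_le hk' hk''k' (mul_comm k' k'' ▸ heq2 ▸ le_abs_self _) h5) ht
  obtain ⟨a, ha, hma⟩ := exists_eq_mul_of_mul_eq_abs hk.le hk'.le heq1
  obtain ⟨b, hb, hmb⟩ := exists_eq_mul_of_mul_eq_abs hk''.le hk'.le (mul_comm k' k'' ▸ heq2)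
  have hn := four_mul_sq_mul_eq hma ht (mul_sub_eq_sub_of_sq_sub_eq hk'.ne' hma hmb ht)
  have hy := sub_pos.2 hkk''
  have hz := sub_pos.2 hk''k'
  rcases ht12 with rfl | rfl <;> rcases ha with rfl | rfl <;> rcases hb with rfl | rfl <;>
    linarith [mul_pos hk hk, mul_pos hy hy, mul_pos hz hz, mul_pos hk hy, mul_pos hk hz,
      mul_pos hy hz]

theorem stmt_4 (n k k' k'' m m' : ℤ) (hn : 0 < n) (hns : ¬ IsSquare n)
    (hk : 0 < k) (hk' : 0 < k') (hk'' : 0 < k'') (hm : 0 < m) (hm' : 0 < m')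
    (hkn : k ^ 2 < n)
    (heq1 : k * k' = |m ^ 2 - n|) (heq2 : k' * k'' = |m' ^ 2 - n|)
    (hdvd : k' ∣ m + m')
    (h1 : 4 * k' ^ 2 + k ^ 2 ≤ 4 * n) (h2 : 4 * k'' ^ 2 + k' ^ 2 ≤ 4 * n) :
    4 * k' ^ 2 + k'' ^ 2 ≤ 4 * n :=
  stmt_4_general n k k' k'' m m' hk hk' hk'' hm hm' heq1 heq2 hdvd h1 h2
end

section
/- Let n be a nonsquare positive integer and let k, k', k'', m, m' be positive integers such that k² < n, k·k' = |m² − n|, k'·k'' = |m'² − n|, k' divides m + m', 4k'² + k² ≤ 4n, 4k''² + k'² ≤ 4n, and moreover k < k'' < k'. Then the positive integer l = (m + m')/k' satisfies l ≥ 2; and if furthermore m'² > n, then l ≥ 3. -/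
/-!
As `k'² ≤ n`, a positive `m < k'` has `m² < n`. This applies to `m` and `m'` when `m + m' = k'`,
and to `m` when `m + m' = 2 k'` and `m'² > n`. In either case the relations `k k' = |m² - n|` and
`k' k'' = |m'² - n|` then combine, after cancelling `k'` from `m'² - m² = (m' - m)(m + m')`, into a
linear relation between `k`, `k''` and `m' - m`. Together with `2 m ≥ 2 k' - k`, which is
`4 m² = 4 n - 4 k k' ≥ (2 k' - k)²`, it contradicts `k'' < k'` in the first case and `k < k''` in
the second.
-/

variable {R : Type*} [CommRing R] [LinearOrder R] [IsStrictOrderedRing R] {n k k' k'' m m' : R}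

lemma two_mul_sub_le_two_mul_of_mul_eq_sub_sq (hkk' : k * k' = n - m ^ 2)
    (h : 4 * k' ^ 2 + k ^ 2 ≤ 4 * n) (hm : 0 ≤ m) : 2 * k' - k ≤ 2 * m := by
  have hsq : (2 * k' - k) ^ 2 ≤ (2 * m) ^ 2 := by nlinarith
  exact (le_abs_self _).trans (abs_le_of_sq_le_sq hsq (by positivity))

lemma sq_lt_of_lt_of_four_mul_sq_add_sq_le (hm : 0 ≤ m) (hmk' : m < k')
    (h : 4 * k' ^ 2 + k ^ 2 ≤ 4 * n) : m ^ 2 < n := by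
  nlinarith [sq_nonneg k]

lemma add_ne_of_four_mul_sq_add_sq_le (hk' : 0 < k') (hm : 0 < m) (hm' : 0 < m')
    (heq : k * k' = |m ^ 2 - n|) (heq' : k' * k'' = |m' ^ 2 - n|)
    (h : 4 * k' ^ 2 + k ^ 2 ≤ 4 * n) (hk'' : k'' < k') : m + m' ≠ k' := by
  intro hsum
  have hmn := sq_lt_of_lt_of_four_mul_sq_add_sq_le hm.le (by linarith) h
  have hm'n := sq_lt_of_lt_of_four_mul_sq_add_sq_le hm'.le (by linarith) h
  rw [abs_of_neg (sub_neg.2 hmn), neg_sub] at heq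
  rw [abs_of_neg (sub_neg.2 hm'n), neg_sub] at heq'
  have hdiff : k - k'' = m' - m :=
    mul_left_cancel₀ hk'.ne' (by linear_combination heq - heq' + (m' - m) * hsum)
  have := two_mul_sub_le_two_mul_of_mul_eq_sub_sq heq h hm.le
  linarith

lemma add_ne_two_mul_of_lt_sq (hk' : 0 < k') (hm : 0 < m) (hm' : 0 < m')
    (heq : k * k' = |m ^ 2 - n|) (heq' : k' * k'' = |m' ^ 2 - n|)
    (h : 4 * k' ^ 2 + k ^ 2 ≤ 4 * n) (hk : k < k'') (hnm' : n < m' ^ 2) :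
    m + m' ≠ 2 * k' := by
  intro hsum
  have hk'm' : k' < m' := by nlinarith [sq_nonneg k]
  have hmn := sq_lt_of_lt_of_four_mul_sq_add_sq_le hm.le (by linarith) h
  rw [abs_of_neg (sub_neg.2 hmn), neg_sub] at heq
  rw [abs_of_pos (sub_pos.2 hnm')] at heq'
  have hsum' : k + k'' = 2 * (m' - m) :=
    mul_left_cancel₀ hk'.ne' (by linear_combination heq + heq' + (m' - m) * hsum)
  have := two_mul_sub_le_two_mul_of_mul_eq_sub_sq heq h hm.le
  linarith

theorem stmt_5_general (n k k' k'' m m' l : ℤ)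
    (hk' : 0 < k') (hm : 0 < m) (hm' : 0 < m')
    (heq1 : k * k' = |m ^ 2 - n|) (heq2 : k' * k'' = |m' ^ 2 - n|)
    (h1 : 4 * k' ^ 2 + k ^ 2 ≤ 4 * n)
    (hlt1 : k < k'') (hlt2 : k'' < k')
    (hl : m + m' = k' * l) :
    2 ≤ l ∧ (n < m' ^ 2 → 3 ≤ l) := by
  have hl0 : 0 < l := pos_of_mul_pos_right (hl ▸ add_pos hm hm') hk'.le
  have hl1 : l ≠ 1 := by
    rintro rfl
    exact add_ne_of_four_mul_sq_add_sq_le hk' hm hm' heq1 heq2 h1 hlt2 (by rw [hl, mul_one])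
  have hl2 : n < m' ^ 2 → l ≠ 2 := by
    rintro hnm' rfl
    exact add_ne_two_mul_of_lt_sq hk' hm hm' heq1 heq2 h1 hlt1 hnm' (by rw [hl, mul_comm])
  exact ⟨by omega, fun hnm' => by have := hl2 hnm'; omega⟩

theorem stmt_5 (n k k' k'' m m' l : ℤ) (hn : 0 < n) (hns : ¬ IsSquare n)
    (hk : 0 < k) (hk' : 0 < k') (hk'' : 0 < k'') (hm : 0 < m) (hm' : 0 < m')
    (hkn : k ^ 2 < n)
    (heq1 : k * k' = |m ^ 2 - n|) (heq2 : k' * k'' = |m' ^ 2 - n|)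
    (h1 : 4 * k' ^ 2 + k ^ 2 ≤ 4 * n) (h2 : 4 * k'' ^ 2 + k' ^ 2 ≤ 4 * n)
    (hlt1 : k < k'') (hlt2 : k'' < k')
    (hl : m + m' = k' * l) :
    2 ≤ l ∧ (n < m' ^ 2 → 3 ≤ l) :=
  stmt_5_general n k k' k'' m m' l hk' hm hm' heq1 heq2 h1 hlt1 hlt2 hl
end

section
/- Let n be a nonsquare positive integer and let k, k', k'', m, m' be positive integers such that k² < n, k·k' = |m² − n|, k'·k'' = |m'² − n|, k' divides m + m', 4k'² + k² ≤ 4n, 4k''² + k'² ≤ 4n, and moreover k < k'' < k'. Then: if m'² < n one has 2m' > 2k' − k'', and if m'² > n one has 2m' > 2k' + k''. -/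
/-!
Write `m + m' = t k'` and `m² - n = a k'`, `m'² - n = a' k'` with `|a| = k`, `|a'| = k''`.
Then `t (m - m') = a - a'`, and `4k'² + k² ≤ 4n` gives `2m ≥ 2k' + a` since
`4m² = 4n + 4ak' ≥ (2k' + a)²`. Eliminating `m` leaves an inequality in `t` alone:
`t = 1` is impossible, `t = 2` gives the claim because `|a| < |a'|`, and for `t ≥ 3` the
term `t (t - 2) k'` dominates because `|a|, |a'| < k'`.
-/

section OrderedRing

variable {R : Type*} [CommRing R] [LinearOrder R] [IsStrictOrderedRing R]

lemma exists_abs_eq_and_eq_mul_of_mul_eq_abs {k b x : R} (hb : 0 < b) (h : k * b = |x|) :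
    ∃ a, |a| = k ∧ x = a * b := by
  have hk : 0 ≤ k := nonneg_of_mul_nonneg_left (h ▸ abs_nonneg x) hb
  rcases abs_choice x with hx | hx
  · exact ⟨k, abs_of_nonneg hk, by rw [h, hx]⟩
  · exact ⟨-k, by rw [abs_neg, abs_of_nonneg hk], by linarith⟩

lemma two_mul_add_le_two_mul_of_sq_sub_eq {m n a b : R} (hm : 0 ≤ m)
    (h : 4 * b ^ 2 + a ^ 2 ≤ 4 * n) (heq : m ^ 2 - n = a * b) : 2 * b + a ≤ 2 * m := by
  have hsq : (2 * b + a) ^ 2 ≤ (2 * m) ^ 2 := by nlinarith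
  exact (le_abs_self _).trans (abs_le_of_sq_le_sq hsq (by positivity))

end OrderedRing

lemma mul_sub_eq_of_add_eq_mul {R : Type*} [CommRing R] [IsDomain R] {m m' b t c : R}
    (hb : b ≠ 0) (hsum : m + m' = b * t) (heq : m ^ 2 - m' ^ 2 = c * b) : t * (m - m') = c :=
  mul_left_cancel₀ hb <| by linear_combination -(m - m') * hsum + heq

lemma two_mul_add_lt_two_mul_of_mul_sub_eq {m m' a a' b t : ℤ} (ht : 0 < t)
    (hsum : m + m' = b * t) (hdiff : t * (m - m') = a - a') (hm : 2 * b + a ≤ 2 * m)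
    (haa' : |a| < |a'|) (ha'b : |a'| < b) : 2 * b + a' < 2 * m' := by
  have ha := abs_lt.mp (haa'.trans ha'b)
  have ha' := abs_lt.mp ha'b
  obtain rfl | rfl | ht3 : t = 1 ∨ t = 2 ∨ 3 ≤ t := by omega
  · linarith
  · have hle : a + a' ≤ 0 := by linarith
    have hne : a + a' ≠ 0 := fun h => by
      rw [eq_neg_of_add_eq_zero_right h, abs_neg] at haa'
      exact haa'.false
    linarith [hle.lt_of_ne hne]
  · have hbt : b * 3 ≤ b * t := by nlinarith
    nlinarith

lemma two_mul_add_lt_two_mul_of_dvd_add {n m m' a a' b : ℤ} (hm : 0 < m) (hm' : 0 < m')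
    (hb : 0 < b) (hdvd : b ∣ m + m') (h : 4 * b ^ 2 + a ^ 2 ≤ 4 * n)
    (heq : m ^ 2 - n = a * b) (heq' : m' ^ 2 - n = a' * b)
    (haa' : |a| < |a'|) (ha'b : |a'| < b) : 2 * b + a' < 2 * m' := by
  obtain ⟨t, hsum⟩ := hdvd
  have ht : 0 < t := pos_of_mul_pos_right (hsum ▸ add_pos hm hm') hb.le
  have hdiff : t * (m - m') = a - a' :=
    mul_sub_eq_of_add_eq_mul hb.ne' hsum (by linear_combination heq - heq')
  exact two_mul_add_lt_two_mul_of_mul_sub_eq ht hsum hdiff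
    (two_mul_add_le_two_mul_of_sq_sub_eq hm.le h heq) haa' ha'b

theorem stmt_6_general (n k k' k'' m m' : ℤ)
    (hk' : 0 < k') (hm : 0 < m) (hm' : 0 < m')
    (heq1 : k * k' = |m ^ 2 - n|) (heq2 : k' * k'' = |m' ^ 2 - n|)
    (hdvd : k' ∣ m + m')
    (h1 : 4 * k' ^ 2 + k ^ 2 ≤ 4 * n)
    (hlt1 : k < k'') (hlt2 : k'' < k') :
    (m' ^ 2 < n → 2 * m' > 2 * k' - k'') ∧ (n < m' ^ 2 → 2 * m' > 2 * k' + k'') := by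
  obtain ⟨a, rfl, heq⟩ := exists_abs_eq_and_eq_mul_of_mul_eq_abs hk' heq1
  have hk'' : 0 < k'' := (abs_nonneg a).trans_lt hlt1
  have key := fun a' (heq' : m' ^ 2 - n = a' * k') (ha' : |a'| = k'') =>
    two_mul_add_lt_two_mul_of_dvd_add hm hm' hk' hdvd (by rwa [sq_abs] at h1) heq heq'
      (ha' ▸ hlt1) (ha' ▸ hlt2)
  constructor
  · intro hlt
    have := key (-k'') (by rw [abs_of_neg (by linarith)] at heq2; linarith)
      (by rw [abs_neg, abs_of_pos hk''])
    linarith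
  · intro hlt
    have := key k'' (by rw [abs_of_pos (by linarith)] at heq2; linarith) (abs_of_pos hk'')
    linarith

theorem stmt_6 (n k k' k'' m m' : ℤ) (hn : 0 < n) (hns : ¬ IsSquare n)
    (hk : 0 < k) (hk' : 0 < k') (hk'' : 0 < k'') (hm : 0 < m) (hm' : 0 < m')
    (hkn : k ^ 2 < n)
    (heq1 : k * k' = |m ^ 2 - n|) (heq2 : k' * k'' = |m' ^ 2 - n|)
    (hdvd : k' ∣ m + m')
    (h1 : 4 * k' ^ 2 + k ^ 2 ≤ 4 * n) (h2 : 4 * k'' ^ 2 + k' ^ 2 ≤ 4 * n)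
    (hlt1 : k < k'') (hlt2 : k'' < k') :
    (m' ^ 2 < n → 2 * m' > 2 * k' - k'') ∧ (n < m' ^ 2 → 2 * m' > 2 * k' + k'') :=
  stmt_6_general n k k' k'' m m' hk' hm hm' heq1 heq2 hdvd h1 hlt1 hlt2
end

section
/- Let n be a nonsquare positive integer and let k, m be positive integers with k² < n and m² < n. If both m and m + k are best mod k, then k is even, 4n = (2m + k)² + k², and, setting k' = m + k/2, one has |m² − n| = |(m + k)² − n| = k·k'. -/
theorem IsBest.abs_sq_sub_eq {n k a b : ℤ} (ha : IsBest n k a) (hb : IsBest n k b)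
    (ha₀ : 0 < a) (hb₀ : 0 < b) (hab : a ≡ b [ZMOD k]) :
    |a ^ 2 - n| = |b ^ 2 - n| :=
  le_antisymm (ha b hb₀ hab.symm) (hb a ha₀ hab)

theorem add_eq_two_mul_of_abs_sub_eq_abs_sub {R : Type*} [CommRing R] [LinearOrder R]
    [IsOrderedRing R] {x y c : R} (h : |x - c| = |y - c|) (hxy : x ≠ y) :
    x + y = 2 * c := by
  rcases abs_eq_abs.mp h with h | h
  · exact absurd (sub_left_injective h) hxy
  · linear_combination h

theorem stmt_7_general (n k m : ℤ)
    (hk : 0 < k) (hm : 0 < m)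
    (hbest : IsBest n k m) (hbest' : IsBest n k (m + k)) :
    ∃ t : ℤ, k = 2 * t ∧ 4 * n = (2 * m + k) ^ 2 + k ^ 2 ∧
      |m ^ 2 - n| = k * (m + t) ∧ |(m + k) ^ 2 - n| = k * (m + t) := by
  have hlt : m ^ 2 < (m + k) ^ 2 := by nlinarith
  have hsum : m ^ 2 + (m + k) ^ 2 = 2 * n :=
    add_eq_two_mul_of_abs_sub_eq_abs_sub
      (hbest.abs_sq_sub_eq hbest' hm (by omega) (by simp [Int.ModEq])) hlt.ne
  obtain ⟨t, rfl⟩ : Even k :=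
    (Int.even_pow' two_ne_zero).mp ⟨n - m ^ 2 - m * k, by linear_combination hsum⟩
  refine ⟨t, (two_mul t).symm, by linear_combination -2 * hsum, ?_, ?_⟩
  · rw [abs_of_neg (by linarith)]
    linarith
  · rw [abs_of_pos (by linarith)]
    linarith

theorem stmt_7 (n k m : ℤ) (hn : 0 < n) (hns : ¬ IsSquare n)
    (hk : 0 < k) (hm : 0 < m) (hkn : k ^ 2 < n) (hmn : m ^ 2 < n)
    (hbest : IsBest n k m) (hbest' : IsBest n k (m + k)) :
    ∃ t : ℤ, k = 2 * t ∧ 4 * n = (2 * m + k) ^ 2 + k ^ 2 ∧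
      |m ^ 2 - n| = k * (m + t) ∧ |(m + k) ^ 2 - n| = k * (m + t) :=
  stmt_7_general n k m hk hm hbest hbest'
end

section
/- Let n be a nonsquare positive integer, let k be a positive even integer and k' a positive integer such that 4n = 4k'² + k² and k² < n. Then k' > k/2, both k' − k/2 and k' + k/2 are positive, both are best mod k, and |(k' − k/2)² − n| = |(k' + k/2)² − n| = k·k'; consequently both (k, k' − k/2, k') and (k, k' + k/2, k') are steps ('twin' steps). -/
section SumOfTwoSquares

variable {k' t : ℤ}

theorem two_mul_le_abs_sq_add_odd_mul_sub (ht : 0 < t) (hk' : 0 ≤ k') {u : ℤ} (hu : Odd u)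
    (hm : 0 < k' + u * t) : 2 * t * k' ≤ |(k' + u * t) ^ 2 - (k' ^ 2 + t ^ 2)| := by
  have hfactor : (k' + u * t) ^ 2 - (k' ^ 2 + t ^ 2) = t * (2 * k' * u + t * (u ^ 2 - 1)) := by
    ring
  obtain ⟨j, rfl⟩ := hu
  rw [hfactor]
  rcases le_or_gt 0 j with hj | hj
  · refine le_trans ?_ (le_abs_self _)
    nlinarith [mul_nonneg (mul_nonneg ht.le ht.le) (mul_nonneg hj (by linarith : (0 : ℤ) ≤ j + 1)),
      mul_nonneg (mul_nonneg ht.le hk') hj]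
  · set v := -(2 * j + 1)
    have hv1 : 0 ≤ v - 1 := by omega
    have hvt : t * v < k' := by nlinarith
    have hkey : 0 ≤ (v - 1) * (2 * k' - t * (v + 1)) := mul_nonneg hv1 (by nlinarith)
    refine le_trans ?_ (neg_le_abs _)
    nlinarith

theorem two_mul_le_abs_sq_sub_of_modEq (ht : 0 < t) (hk' : 0 ≤ k') {m : ℤ} (hm : 0 < m)
    (hmod : m ≡ k' + t [ZMOD 2 * t]) : 2 * t * k' ≤ |m ^ 2 - (k' ^ 2 + t ^ 2)| := by
  obtain ⟨j, hj⟩ := hmod.symm.dvd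
  have hm_eq : m = k' + (2 * j + 1) * t := by linarith
  subst hm_eq
  exact two_mul_le_abs_sq_add_odd_mul_sub ht hk' ⟨j, rfl⟩ hm

theorem isBest_of_modEq (ht : 0 < t) (hk' : 0 ≤ k') {m : ℤ} (hmod : m ≡ k' + t [ZMOD 2 * t])
    (habs : |m ^ 2 - (k' ^ 2 + t ^ 2)| = 2 * t * k') : IsBest (k' ^ 2 + t ^ 2) (2 * t) m :=
  fun _ hm' hc => habs ▸ two_mul_le_abs_sq_sub_of_modEq ht hk' hm' (hc.trans hmod)

theorem abs_sq_add_sub (ht : 0 ≤ t) (hk' : 0 ≤ k') :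
    |(k' + t) ^ 2 - (k' ^ 2 + t ^ 2)| = 2 * t * k' := by
  rw [abs_of_nonneg (by nlinarith)]
  ring

theorem abs_sq_sub_sub (ht : 0 ≤ t) (hk' : 0 ≤ k') :
    |(k' - t) ^ 2 - (k' ^ 2 + t ^ 2)| = 2 * t * k' := by
  rw [abs_of_nonpos (by nlinarith)]
  ring

theorem sub_modEq_add : k' - t ≡ k' + t [ZMOD 2 * t] :=
  Int.modEq_iff_dvd.mpr ⟨1, by ring⟩

end SumOfTwoSquares

theorem stmt_8_general (n k k' t : ℤ)
    (hk : 0 < k) (hk' : 0 < k') (ht : k = 2 * t)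
    (hsum : 4 * n = 4 * k' ^ 2 + k ^ 2) (hkn : k ^ 2 < n) :
    t < k' ∧ 0 < k' - t ∧ 0 < k' + t ∧
    IsBest n k (k' - t) ∧ IsBest n k (k' + t) ∧
    |(k' - t) ^ 2 - n| = k * k' ∧ |(k' + t) ^ 2 - n| = k * k' ∧
    IsStep n k (k' - t) k' ∧ IsStep n k (k' + t) k' := by
  subst ht
  have htpos : 0 < t := by linarith
  have hn : n = k' ^ 2 + t ^ 2 := by nlinarith
  subst hn
  have hlt : t < k' := by nlinarith
  have habs_sub := abs_sq_sub_sub htpos.le hk'.le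
  have habs_add := abs_sq_add_sub htpos.le hk'.le
  have hbest_sub := isBest_of_modEq htpos hk'.le sub_modEq_add habs_sub
  have hbest_add := isBest_of_modEq htpos hk'.le (Int.ModEq.refl _) habs_add
  exact ⟨hlt, by linarith, by linarith, hbest_sub, hbest_add, habs_sub, habs_add,
    ⟨hk, by linarith, hk', hkn, habs_sub, hbest_sub⟩,
    ⟨hk, by linarith, hk', hkn, habs_add, hbest_add⟩⟩

theorem stmt_8 (n k k' t : ℤ) (hn : 0 < n) (hns : ¬ IsSquare n)
    (hk : 0 < k) (hk' : 0 < k') (ht : k = 2 * t)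
    (hsum : 4 * n = 4 * k' ^ 2 + k ^ 2) (hkn : k ^ 2 < n) :
    t < k' ∧ 0 < k' - t ∧ 0 < k' + t ∧
    IsBest n k (k' - t) ∧ IsBest n k (k' + t) ∧
    |(k' - t) ^ 2 - n| = k * k' ∧ |(k' + t) ^ 2 - n| = k * k' ∧
    IsStep n k (k' - t) k' ∧ IsStep n k (k' + t) k' :=
  stmt_8_general n k k' t hk hk' ht hsum hkn
end

section
/- Let n be a nonsquare positive integer, let k be a positive even integer and k' a positive integer with 4n = 4k'² + k², k² < n, and k < k'. Then k' − k/2 is strictly best mod k', k' − k/2 ≡ −(k' + k/2) (mod k'), and |(k' − k/2)² − n| = k'·k; hence (k', k' − k/2, k) is a step and is the unique successor of the twin step (k, k' + k/2, k'). -/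
/-!
Since `4n = 4k'² + k²` with `k = 2t`, we have `n = k'² + t²`, so `(k' - t)² - n = -k'k`.
Because `0 < k' - t < k'`, every other positive representative of `k' - t` mod `k'` is at least
`2k' - t`, and `(2k' - t)² - n = k'(3k' - 4t)` exceeds `k'k = 2k't` exactly because `2t < k'`.
Strict minimality then forces any successor step to use `k' - t`, and cancelling `k'` in
`|m² - n| = k'k''` pins down the last entry.
-/

theorem IsStrictBest.isBest {n k m : ℤ} (h : IsStrictBest n k m) : IsBest n k m := by
  intro m' hm' hmod
  rcases eq_or_ne m' m with rfl | hne
  · exact le_rfl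
  · exact (h m' hm' hmod hne).le

theorem IsStrictBest.eq_of_isBest {n k m m' : ℤ} (h : IsStrictBest n k m) (hm : 0 < m)
    (hm' : 0 < m') (hmod : m' ≡ m [ZMOD k]) (h' : IsBest n k m') : m' = m := by
  by_contra hne
  exact (h m' hm' hmod hne).not_ge (h' m hm hmod.symm)

theorem add_le_of_modEq_of_lt {k m m' : ℤ} (hm : 0 ≤ m) (hmk : m < k) (hm' : 0 < m')
    (hmod : m' ≡ m [ZMOD k]) (hne : m' ≠ m) : m + k ≤ m' := by
  obtain ⟨c, hc⟩ := hmod.symm.dvd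
  rcases lt_trichotomy c 0 with hc0 | rfl | hc0
  · nlinarith
  · exact absurd (by linarith) hne
  · nlinarith

theorem isStrictBest_of_nonneg_of_lt {n k m : ℤ} (hm : 0 ≤ m) (hmk : m < k)
    (h : |m ^ 2 - n| < (m + k) ^ 2 - n) : IsStrictBest n k m := by
  intro m' hm' hmod hne
  have hle := add_le_of_modEq_of_lt hm hmk hm' hmod hne
  calc |m ^ 2 - n| < (m + k) ^ 2 - n := h
    _ ≤ m' ^ 2 - n := by nlinarith
    _ ≤ |m' ^ 2 - n| := le_abs_self _

theorem IsStep.eq_of_isStrictBest {n k m m' k' k'' : ℤ} (hs : IsStep n k m' k'')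
    (h : IsStrictBest n k m) (hm : 0 < m) (habs : |m ^ 2 - n| = k * k')
    (hmod : m' ≡ m [ZMOD k]) : m' = m ∧ k'' = k' := by
  obtain ⟨hk, hm', -, -, habs', hbest⟩ := hs
  obtain rfl := h.eq_of_isBest hm hm' hmod hbest
  exact ⟨rfl, mul_left_cancel₀ hk.ne' (habs'.symm.trans habs)⟩

theorem stmt_9_general (n k k' t : ℤ)
    (hk : 0 < k) (ht : k = 2 * t)
    (hsum : 4 * n = 4 * k' ^ 2 + k ^ 2) (hkk' : k < k') :
    IsStrictBest n k' (k' - t) ∧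
    k' - t ≡ -(k' + t) [ZMOD k'] ∧
    |(k' - t) ^ 2 - n| = k' * k ∧
    IsStep n k' (k' - t) k ∧
    (∀ m'' k''' : ℤ, IsStep n k' m'' k''' → m'' ≡ -(k' + t) [ZMOD k'] →
      m'' = k' - t ∧ k''' = k) := by
  have htpos : 0 < t := by omega
  have hk'pos : 0 < k' := by omega
  have hn : n = k' ^ 2 + t ^ 2 := by subst ht; linarith
  have habs : |(k' - t) ^ 2 - n| = k' * k := by
    rw [hn, ht, show (k' - t) ^ 2 - (k' ^ 2 + t ^ 2) = -(k' * (2 * t)) by ring, abs_neg,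
      abs_of_pos (by positivity)]
  have hsb : IsStrictBest n k' (k' - t) := by
    refine isStrictBest_of_nonneg_of_lt (by omega) (by omega) ?_
    rw [habs, hn, ht]
    nlinarith [mul_pos hk'pos (show 0 < k' - 2 * t by omega)]
  have hcong : k' - t ≡ -(k' + t) [ZMOD k'] := Int.modEq_iff_dvd.mpr ⟨-2, by ring⟩
  have hstep : IsStep n k' (k' - t) k :=
    ⟨hk'pos, by omega, hk, by nlinarith, habs, hsb.isBest⟩
  exact ⟨hsb, hcong, habs, hstep, fun m'' k''' hs hmod =>
    hs.eq_of_isStrictBest hsb (by omega) habs (hmod.trans hcong.symm)⟩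

theorem stmt_9 (n k k' t : ℤ) (hn : 0 < n) (hns : ¬ IsSquare n)
    (hk : 0 < k) (hk' : 0 < k') (ht : k = 2 * t)
    (hsum : 4 * n = 4 * k' ^ 2 + k ^ 2) (hkn : k ^ 2 < n) (hkk' : k < k') :
    IsStrictBest n k' (k' - t) ∧
    k' - t ≡ -(k' + t) [ZMOD k'] ∧
    |(k' - t) ^ 2 - n| = k' * k ∧
    IsStep n k' (k' - t) k ∧
    (∀ m'' k''' : ℤ, IsStep n k' m'' k''' → m'' ≡ -(k' + t) [ZMOD k'] →
      m'' = k' - t ∧ k''' = k) :=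
  stmt_9_general n k k' t hk ht hsum hkk'
end

section
/- Let n be a nonsquare positive integer, and let (k_0, m_0, k_1), (k_1, m_1, k_2), …, (k_N, m_N, k_{N+1}) be a finite chain of steps such that k_0 = 1 and, for every 1 ≤ i ≤ N, k_i divides m_{i−1} + m_i. Then every step (k_i, m_i, k_{i+1}) of the chain is reduced, i.e. m_i is best mod k_{i+1} for every 0 ≤ i ≤ N. -/
section

variable {α : Type*} [CommRing α] [LinearOrder α] [IsStrictOrderedRing α] {a b c : α}

theorem abs_sub_le_abs_sub_iff (h : a < b) : |a - c| ≤ |b - c| ↔ 2 * c ≤ a + b := by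
  constructor <;> intro h' <;>
    rcases abs_cases (a - c) with ⟨h1, _⟩ | ⟨h1, _⟩ <;>
    rcases abs_cases (b - c) with ⟨h2, _⟩ | ⟨h2, _⟩ <;> linarith

theorem abs_sub_le_abs_sub_iff' (h : a < b) : |b - c| ≤ |a - c| ↔ a + b ≤ 2 * c := by
  constructor <;> intro h' <;>
    rcases abs_cases (a - c) with ⟨h1, _⟩ | ⟨h1, _⟩ <;>
    rcases abs_cases (b - c) with ⟨h2, _⟩ | ⟨h2, _⟩ <;> linarith

end

theorem Int.ModEq.add_le_or_le_sub {a b k : ℤ} (h : a ≡ b [ZMOD k]) (hab : a ≠ b) :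
    b + k ≤ a ∨ a ≤ b - k := by
  have hk : k ≤ |a - b| := not_lt.mp fun hlt =>
    hab (sub_eq_zero.mp (Int.eq_zero_of_abs_lt_dvd h.symm.dvd hlt))
  rcases abs_cases (a - b) with ⟨h1, _⟩ | ⟨h1, _⟩ <;> [left; right] <;> linarith

section

variable {n k m : ℤ}

theorem IsBest.two_mul_le (h : IsBest n k m) (hk : 0 < k) (hm : 0 < m) :
    2 * n ≤ m ^ 2 + (m + k) ^ 2 := by
  have hlt : m ^ 2 < (m + k) ^ 2 := pow_lt_pow_left₀ (by linarith) hm.le two_ne_zero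
  exact (abs_sub_le_abs_sub_iff hlt).mp (h (m + k) (by linarith) Int.add_modEq_right)

theorem IsBest.le_two_mul (h : IsBest n k m) (hk : 0 < k) (hkm : k < m) :
    m ^ 2 + (m - k) ^ 2 ≤ 2 * n := by
  have hlt : (m - k) ^ 2 < m ^ 2 := pow_lt_pow_left₀ (by linarith) (by linarith) two_ne_zero
  rw [add_comm]
  exact (abs_sub_le_abs_sub_iff' hlt).mp
    (h (m - k) (by linarith) (Int.sub_modulus_modEq_iff.mpr rfl))

theorem isBest_of_two_mul_le (hk : 0 < k) (hm : 0 < m) (h₁ : 2 * n ≤ m ^ 2 + (m + k) ^ 2)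
    (h₂ : k < m → m ^ 2 + (m - k) ^ 2 ≤ 2 * n) : IsBest n k m := by
  intro m' hm' hmod
  rcases eq_or_ne m' m with rfl | hne
  · exact le_rfl
  rcases hmod.add_le_or_le_sub hne with hge | hle
  · have hlt : m ^ 2 < m' ^ 2 := pow_lt_pow_left₀ (by linarith) hm.le two_ne_zero
    refine (abs_sub_le_abs_sub_iff hlt).mpr (h₁.trans ?_)
    gcongr
  · have hlt : m' ^ 2 < m ^ 2 := pow_lt_pow_left₀ (by linarith) hm'.le two_ne_zero
    refine (abs_sub_le_abs_sub_iff' hlt).mpr (le_trans ?_ (h₂ (by linarith)))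
    rw [add_comm]
    gcongr

theorem IsBest.of_dvd {k' : ℤ} (h : IsBest n k m) (hd : k ∣ k') : IsBest n k' m :=
  fun m' hm' hmod => h m' hm' (hmod.of_dvd hd)

end

theorem IsStep.sub_sq_add_sq_le {n q p k : ℤ} (h : IsStep n q p k) :
    (p - k) ^ 2 + k ^ 2 ≤ n := by
  obtain ⟨hq, hp, hk, hqn, hpn, hbest⟩ := h
  rcases abs_cases (p ^ 2 - n) with ⟨habs, hsign⟩ | ⟨habs, hsign⟩
  · have hpn' : p ^ 2 - n = q * k := habs ▸ hpn
    have hqp : q < p := lt_of_pow_lt_pow_left₀ 2 hp.le (by linarith)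
    have := hbest.le_two_mul hq hqp
    have hqk : q + 2 * k ≤ 2 * p := le_of_mul_le_mul_left (by nlinarith) hq
    nlinarith [mul_le_mul_of_nonneg_right hqk hk.le]
  · have hpn' : n - p ^ 2 = q * k := by linarith
    have := hbest.two_mul_le hq hp
    have hqk : 2 * k ≤ 2 * p + q := le_of_mul_le_mul_left (by nlinarith) hq
    nlinarith [mul_le_mul_of_nonneg_right hqk hk.le]

theorem isBest_of_sub_sq_add_sq_le {n k m k' : ℤ} (hk : 0 < k) (hm : 0 < m) (hk' : 0 < k')
    (hmn : |m ^ 2 - n| = k * k') (hbest : IsBest n k m)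
    (h : 2 * m ≤ 3 * k → (m - k) ^ 2 + k ^ 2 ≤ n) : IsBest n k' m := by
  rcases abs_cases (m ^ 2 - n) with ⟨habs, hsign⟩ | ⟨habs, hsign⟩
  · have hmn' : m ^ 2 - n = k * k' := habs ▸ hmn
    refine isBest_of_two_mul_le hk' hm (by nlinarith) fun hk'm => ?_
    suffices k' + 2 * k ≤ 2 * m by nlinarith
    by_contra! hlt
    have h3k : 2 * m ≤ 3 * k := by
      rcases le_or_gt m k with hmk | hkm
      · linarith
      · have := hbest.le_two_mul hk hkm
        nlinarith
    have := h h3k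
    nlinarith
  · have hmn' : n - m ^ 2 = k * k' := by linarith
    refine isBest_of_two_mul_le hk' hm ?_ fun hk'm => by nlinarith
    suffices 2 * k ≤ 2 * m + k' by nlinarith
    by_contra! hlt
    have := h (by linarith)
    nlinarith

theorem IsStep.sub_sq_add_sq_le_of_dvd_add {n q p k m : ℤ} (hstep : IsStep n q p k)
    (hp : IsBest n k p) (hm : IsBest n k m) (hm0 : 0 < m) (hdvd : k ∣ p + m)
    (h3k : 2 * m ≤ 3 * k) : (m - k) ^ 2 + k ^ 2 ≤ n := by
  have hpk := hstep.sub_sq_add_sq_le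
  obtain ⟨-, hp0, hk, -⟩ := hstep
  obtain ⟨t, ht⟩ := hdvd
  have ht0 : 0 < t := pos_of_mul_pos_right (ht ▸ by linarith) hk.le
  rcases show t = 1 ∨ t = 2 ∨ 3 ≤ t by omega with rfl | rfl | ht3
  · obtain rfl : p = k - m := by linarith
    have := hm.two_mul_le hk hm0
    nlinarith
  · nlinarith
  · have hpge : 3 * k - m ≤ p := by nlinarith
    have := hp.le_two_mul hk (by linarith)
    nlinarith

theorem IsStep.isBest_of_dvd_add {n q p k m k' : ℤ} (hp : IsStep n q p k)
    (hpk : IsBest n k p) (hm : IsStep n k m k') (hdvd : k ∣ p + m) : IsBest n k' m := by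
  obtain ⟨hk, hm0, hk', -, hmn, hbest⟩ := hm
  exact isBest_of_sub_sq_add_sq_le hk hm0 hk' hmn hbest
    (hp.sub_sq_add_sq_le_of_dvd_add hpk hbest hm0 hdvd)

theorem stmt_11_general (n : ℤ)
    (N : ℕ) (k : ℕ → ℤ) (m : ℕ → ℤ)
    (hchain : ∀ i ≤ N, IsStep n (k i) (m i) (k (i + 1)))
    (hk0 : k 0 = 1)
    (hdvd : ∀ i, 1 ≤ i → i ≤ N → k i ∣ m (i - 1) + m i) :
    ∀ i ≤ N, IsBest n (k (i + 1)) (m i) := by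
  intro i hi
  induction i with
  | zero =>
    obtain ⟨-, -, -, -, -, hbest⟩ := hchain 0 hi
    exact hbest.of_dvd (hk0 ▸ one_dvd _)
  | succ j ih =>
    exact (hchain j (by omega)).isBest_of_dvd_add (ih (by omega)) (hchain (j + 1) hi)
      (hdvd (j + 1) (by omega) hi)

theorem stmt_11 (n : ℤ) (hn : 0 < n) (hns : ¬ IsSquare n)
    (N : ℕ) (k : ℕ → ℤ) (m : ℕ → ℤ)
    (hchain : ∀ i ≤ N, IsStep n (k i) (m i) (k (i + 1)))
    (hk0 : k 0 = 1)
    (hdvd : ∀ i, 1 ≤ i → i ≤ N → k i ∣ m (i - 1) + m i) :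
    ∀ i ≤ N, IsBest n (k (i + 1)) (m i) :=
  stmt_11_general n N k m hchain hk0 hdvd
end

section
/- Let n be a nonsquare positive integer, let (k, m, k') be a reduced step, and let (k', m', k'') be a successor of it (so (k', m', k'') is a step with m' ≡ −m (mod k')). Then (k'', m', k') is a step, and (k', m, k) is a step which is a successor of (k'', m', k'). -/
/-!
For a step `(K, m, K')`, bestness of `m` mod `K` is equivalent to `(m - K')² + K'² ≤ n`: comparing
`m` with its neighbour `m ± K` on the side of `√n` gives the inequality, and it suffices for the
whole class. The criterion does not involve `K`, so for the successor it remains to pass from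
`(m - k')² + k'² ≤ n` to `(m' - k')² + k'² ≤ n`. With `m + m' = q k'` the two sides differ by
`k' (q - 2) (m' - m)`; when this is positive, either `q = 1`, which bestness of `m'` mod `k'`
rules out, or `q ≥ 3` and `2 m' > 3 k'`, where the same bestness gives the bound directly.
-/

theorem isBest_of_sub_sq_add_sq_le_s12 {n K K' m : ℤ} (hK : 0 < K) (hK' : 0 < K') (hm : 0 < m)
    (habs : |m ^ 2 - n| = K * K') (h : (m - K') ^ 2 + K' ^ 2 ≤ n) : IsBest n K m := by
  intro p hp hpm
  obtain ⟨t, rfl⟩ : ∃ t, p = m + K * t := by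
    obtain ⟨t, ht⟩ := hpm.symm.dvd
    exact ⟨t, by linarith⟩
  have hsq : (m + K * t) ^ 2 - n = (m ^ 2 - n) + K * (t * (2 * m + K * t)) := by ring
  rw [habs, hsq, le_abs]
  rcases abs_cases (m ^ 2 - n) with ⟨hs, hs0⟩ | ⟨hs, hs0⟩ <;> rw [habs] at hs
  · have hlin : K + 2 * K' ≤ 2 * m := le_of_mul_le_mul_left (by nlinarith) hK'
    rcases le_or_gt 0 t with ht | ht
    · have hkey : 0 ≤ t * (2 * m + K * t) := by nlinarith
      left; nlinarith [mul_nonneg hK.le hkey]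
    · have hkey : 2 * K' ≤ -t * (2 * m + K * t) := by
        nlinarith [mul_nonneg (by linarith : (0 : ℤ) ≤ -t - 1)
          (by nlinarith : (0 : ℤ) ≤ m + K * t + m - K)]
      right; nlinarith [mul_le_mul_of_nonneg_left hkey hK.le]
  · have hlin : 2 * K' ≤ 2 * m + K := le_of_mul_le_mul_left (by nlinarith) hK'
    rcases le_or_gt t 0 with ht | ht
    · have hkey : 0 ≤ -t * (2 * m + K * t) := by nlinarith
      right; nlinarith [mul_nonneg hK.le hkey]
    · have hkey : 2 * K' ≤ t * (2 * m + K * t) := by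
        nlinarith [mul_nonneg (by linarith : (0 : ℤ) ≤ t - 1)
          (by nlinarith : (0 : ℤ) ≤ 2 * m + K * t + K)]
      left; nlinarith [mul_le_mul_of_nonneg_left hkey hK.le]

theorem IsStep.sub_sq_add_sq_le_s12 {n K m K' : ℤ} (hns : ¬IsSquare n) (h : IsStep n K m K') :
    (m - K') ^ 2 + K' ^ 2 ≤ n := by
  obtain ⟨hK, hm, hK', hKn, habs, hbest⟩ := h
  rcases abs_cases (m ^ 2 - n) with ⟨hs, hs0⟩ | ⟨hs, hs0⟩ <;> rw [habs] at hs
  · have hKm : K < m := by nlinarith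
    have hle := hbest (m - K) (by linarith) (Int.modEq_sub_modulus_iff.mpr rfl).symm
    have hlt : (m - K) ^ 2 < n := by
      refine lt_of_le_of_ne ?_ fun he => hns ⟨m - K, by rw [← he, sq]⟩
      by_contra! hgt
      rw [habs, abs_of_nonneg (by linarith)] at hle
      nlinarith
    rw [habs, abs_of_neg (by linarith)] at hle
    have hlin : K + 2 * K' ≤ 2 * m := le_of_mul_le_mul_left (by nlinarith) hK
    nlinarith
  · have hle := hbest (m + K) (by linarith) Int.add_modEq_right
    have hgt : n < (m + K) ^ 2 := by
      by_contra! hlt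
      rw [habs, abs_of_nonpos (by linarith)] at hle
      nlinarith
    rw [habs, abs_of_pos (by linarith)] at hle
    have hlin : 2 * K' ≤ 2 * m + K := le_of_mul_le_mul_left (by nlinarith) hK
    nlinarith

theorem IsStep.sq_lt_right {n K m K' : ℤ} (hns : ¬IsSquare n) (h : IsStep n K m K') :
    K' ^ 2 < n :=
  lt_of_le_of_ne (by nlinarith [h.sub_sq_add_sq_le_s12 hns]) fun he => hns ⟨K', by rw [← he, sq]⟩

theorem sub_sq_add_sq_le_of_dvd_add {n k' k'' m m' : ℤ} (hk' : 0 < k') (hk'' : 0 < k'')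
    (hm : 0 < m) (hm' : 0 < m') (hdvd : k' ∣ m + m') (habs : |m' ^ 2 - n| = k' * k'')
    (hD : (m - k') ^ 2 + k' ^ 2 ≤ n) (hD' : (m' - k'') ^ 2 + k'' ^ 2 ≤ n) :
    (m' - k') ^ 2 + k' ^ 2 ≤ n := by
  obtain ⟨q, hq⟩ := hdvd
  have hshift :
      (m' - k') ^ 2 + k' ^ 2 = (m - k') ^ 2 + k' ^ 2 + k' * ((q - 2) * (m' - m)) := by
    linear_combination (m' - m) * hq
  rcases le_or_gt ((q - 2) * (m' - m)) 0 with hneg | hpos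
  · nlinarith [mul_nonpos_of_nonneg_of_nonpos hk'.le hneg]
  have hqpos : 0 < q := by nlinarith
  rcases lt_or_gt_of_ne (show q ≠ 2 by rintro rfl; simp at hpos) with hq2 | hq2
  · obtain rfl : q = 1 := by omega
    have hmm : m' < m := by nlinarith
    exfalso
    rcases abs_cases (m' ^ 2 - n) with ⟨hs, -⟩ | ⟨hs, hs0⟩ <;> rw [habs] at hs
    · have hlin : 2 * k'' + k' ≤ 2 * m' := le_of_mul_le_mul_left (by nlinarith) hk''
      linarith
    · have hle : k' ≤ k'' := le_of_mul_le_mul_left (by nlinarith) hk'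
      have hlin : 2 * k'' ≤ 2 * m' + k' := le_of_mul_le_mul_left (by nlinarith) hk''
      linarith
  · have hsum : k' * 3 ≤ m + m' := hq ▸ mul_le_mul_of_nonneg_left (by omega) hk'.le
    have hmm : m < m' := by nlinarith
    rcases abs_cases (m' ^ 2 - n) with ⟨hs, -⟩ | ⟨hs, hs0⟩ <;> rw [habs] at hs
    · have hlin : 2 * k'' + k' ≤ 2 * m' := le_of_mul_le_mul_left (by nlinarith) hk''
      nlinarith
    · nlinarith

theorem stmt_12_general (n k m k' m' k'' : ℤ) (hns : ¬ IsSquare n)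
    (hstep : IsStep n k m k') (hred : IsBest n k' m)
    (hsucc : IsStep n k' m' k'') (hcong : m' ≡ -m [ZMOD k']) :
    IsStep n k'' m' k' ∧ IsStep n k' m k ∧ m ≡ -m' [ZMOD k'] := by
  have hD := hstep.sub_sq_add_sq_le_s12 hns
  have hD' := hsucc.sub_sq_add_sq_le_s12 hns
  have hk''n := hsucc.sq_lt_right hns
  obtain ⟨hk, hm, hk', -, habs, -⟩ := hstep
  obtain ⟨-, hm', hk'', hk'n, habs', -⟩ := hsucc
  have hdvd : k' ∣ m + m' := dvd_neg.mp (by rw [neg_add']; exact hcong.dvd)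
  have hbest : IsBest n k'' m' := isBest_of_sub_sq_add_sq_le_s12 hk'' hk' hm'
    (by rw [habs', mul_comm]) (sub_sq_add_sq_le_of_dvd_add hk' hk'' hm hm' hdvd habs' hD hD')
  exact ⟨⟨hk'', hm', hk', hk''n, by rw [habs', mul_comm], hbest⟩,
    ⟨hk', hm, hk, hk'n, by rw [habs, mul_comm], hred⟩, by simpa using hcong.neg.symm⟩

theorem stmt_12 (n k m k' m' k'' : ℤ) (hn : 0 < n) (hns : ¬ IsSquare n)
    (hstep : IsStep n k m k') (hred : IsBest n k' m)
    (hsucc : IsStep n k' m' k'') (hcong : m' ≡ -m [ZMOD k']) :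
    IsStep n k'' m' k' ∧ IsStep n k' m k ∧ m ≡ -m' [ZMOD k'] :=
  stmt_12_general n k m k' m' k'' hns hstep hred hsucc hcong
end

section
/- Let n be a nonsquare positive integer. There is no infinite run of the chakravala step sequence: for any sequences of integers (k_i)_{i≥0} and (m_i)_{i≥0} with k_0 = 1, all k_i > 0, and for every i ≥ 0: m_i > 0, m_i ≡ −m_{i−1} (mod k_i) (where m_{−1} := 0), m_i is best mod k_i, and k_i·k_{i+1} = |m_i² − n|, there exists an index i ≥ 1 with k_i = 1. -/
section ReversibleWalk

variable {S : Type*}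

structure IsReversible (σ : S → S) (R : S → S → Prop) : Prop where
  involutive : Function.Involutive σ
  reverse : ∀ {x y}, R x y → R (σ y) (σ x)
  /-- Two successors of one state are tied: each leads back along the other. -/
  fork : ∀ {x y z}, R x y → R x z → y ≠ z → R y (σ z)

structure IsPalindromicWalk (σ : S → S) (R : S → S → Prop) (W : ℤ → S) : Prop where
  rel : ∀ j, R (W j) (W (j + 1))
  flip : ∀ j, W (-1 - j) = σ (W j)
  start : ∀ y, R (W (-1)) y → y = W 0

variable {σ : S → S} {R : S → S → Prop}

theorem IsReversible.join (hR : IsReversible σ R) {x y z : S} (hy : R y x) (hz : R z x)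
    (hne : y ≠ z) : R (σ y) z := by
  simpa only [hR.involutive z] using
    hR.fork (hR.reverse hy) (hR.reverse hz) (hR.involutive.injective.ne hne)

namespace IsPalindromicWalk

variable {W : ℤ → S}

/-- Steps from a nonnegative to a negative position are left out: they cannot be pulled back
towards the center, and the descent never produces them. -/
def IsLink (R : S → S → Prop) (W : ℤ → S) (a b : ℤ) : Prop :=
  (a ≠ b ∧ W a = W b) ∨ (b ≠ a + 1 ∧ (0 ≤ b ∨ a < 0) ∧ R (W a) (W b))

theorem flip_eq_flip (hW : IsPalindromicWalk σ R W) {a b : ℤ} (h : W a = W b) :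
    W (-1 - a) = W (-1 - b) := by
  rw [hW.flip, hW.flip, h]

theorem rel_flip (hR : IsReversible σ R) (hW : IsPalindromicWalk σ R W) {a b : ℤ}
    (h : R (W a) (W b)) : R (W (-1 - b)) (W (-1 - a)) := by
  simpa only [hW.flip] using hR.reverse h

theorem eq_zero_of_eq_neg_one (hW : IsPalindromicWalk σ R W) {a : ℤ} (h : W a = W (-1)) :
    W (a + 1) = W 0 :=
  hW.start _ (h ▸ hW.rel a)

theorem eq_or_rel_of_rel (hR : IsReversible σ R) (hW : IsPalindromicWalk σ R W) {a b : ℤ}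
    (h : R (W a) (W b)) : W a = W (b - 1) ∨ R (W (-1 - a)) (W (b - 1)) := by
  refine or_iff_not_imp_left.2 fun hne => ?_
  have hb := hW.rel (b - 1)
  rw [sub_add_cancel] at hb
  simpa only [hW.flip] using hR.join h hb hne

theorem eq_or_rel_of_eq (hR : IsReversible σ R) (hW : IsPalindromicWalk σ R W) {a b : ℤ}
    (h : W a = W b) : W (a - 1) = W (b - 1) ∨ R (W (-a)) (W (b - 1)) := by
  have ha := hW.rel (a - 1)
  rw [sub_add_cancel, h] at ha
  rcases hW.eq_or_rel_of_rel hR ha with h' | h'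
  · exact Or.inl h'
  · right; rwa [show -1 - (a - 1) = -a by ring] at h'

-- `(2 * a + 1).natAbs` is twice the distance of `a` from the center `-1/2`.
theorem exists_of_rel (hR : IsReversible σ R) (hW : IsPalindromicWalk σ R W) {N : ℕ}
    (IH : ∀ a b, (2 * a + 1).natAbs + (2 * b + 1).natAbs < N → IsLink R W a b →
      ∃ j ≠ 0, W j = W 0)
    {a b : ℤ} (hN : (2 * a + 1).natAbs + (2 * b + 1).natAbs ≤ N) (hab : b ≠ a + 1)
    (hsign : 0 ≤ b ∨ a < 0) (h : R (W a) (W b)) : ∃ j ≠ 0, W j = W 0 := by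
  have back : ∀ a b, (2 * a + 1).natAbs + (2 * b + 1).natAbs ≤ N → b ≠ a + 1 → 1 ≤ b →
      a + b ≠ 1 → R (W a) (W b) → ∃ j ≠ 0, W j = W 0 := by
    intro a b hN hab hb hab1 h
    rcases hW.eq_or_rel_of_rel hR h with h' | h'
    · exact IH a (b - 1) (by omega) (Or.inl ⟨by omega, h'⟩)
    · exact IH (-1 - a) (b - 1) (by omega) (Or.inr ⟨by omega, Or.inl (by omega), h'⟩)
  rcases eq_or_ne a (-1) with rfl | ha
  · exact ⟨b, by omega, hW.start _ h⟩
  rcases eq_or_ne b 0 with rfl | hb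
  · exact ⟨-1 - a, by omega, hW.start _ (by simpa using hW.rel_flip hR h)⟩
  by_cases hback : 1 ≤ b ∧ a + b ≠ 1
  · exact back a b hN hab hback.1 hback.2 h
  · exact back (-1 - b) (-1 - a) (by omega) (by omega) (by omega) (by omega) (hW.rel_flip hR h)

theorem exists_of_eq_center (hW : IsPalindromicWalk σ R W) {a b : ℤ} (hab : a ≠ b)
    (h : W a = W b) (ha : a = 0 ∨ a = -1) : ∃ j ≠ 0, W j = W 0 := by
  rcases ha with rfl | rfl
  · exact ⟨b, hab.symm, h.symm⟩
  · exact ⟨b + 1, by omega, hW.eq_zero_of_eq_neg_one h.symm⟩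

-- Pulling back a repetition across the center keeps the distance, so induct on `a`.
theorem exists_of_eq_across (hR : IsReversible σ R) (hW : IsPalindromicWalk σ R W) {N : ℕ}
    (IH : ∀ a b, (2 * a + 1).natAbs + (2 * b + 1).natAbs < N → IsLink R W a b →
      ∃ j ≠ 0, W j = W 0)
    {a : ℤ} (ha : 1 ≤ a) {b : ℤ} (hN : (2 * a + 1).natAbs + (2 * b + 1).natAbs ≤ N)
    (hab : a ≤ -1 - b) (h : W a = W b) : ∃ j ≠ 0, W j = W 0 := by
  induction a, ha using Int.leInduction generalizing b with
  | base =>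
    rcases hW.eq_or_rel_of_eq hR h with h' | h'
    · exact hW.exists_of_eq_center (by omega) h' (Or.inl rfl)
    · exact hW.exists_of_rel hR IH (by omega) (by omega) (Or.inr (by omega)) h'
  | succ a ha ih =>
    rcases hW.eq_or_rel_of_eq hR h with h' | h'
    · rw [add_sub_cancel_right] at h'
      exact ih (by omega) (by omega) h'
    · exact hW.exists_of_rel hR IH (by omega) (by omega) (Or.inr (by omega)) h'

theorem exists_of_eq (hR : IsReversible σ R) (hW : IsPalindromicWalk σ R W) {N : ℕ}
    (IH : ∀ a b, (2 * a + 1).natAbs + (2 * b + 1).natAbs < N → IsLink R W a b →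
      ∃ j ≠ 0, W j = W 0)
    {a b : ℤ} (hN : (2 * a + 1).natAbs + (2 * b + 1).natAbs ≤ N) (hab : a ≠ b)
    (h : W a = W b) : ∃ j ≠ 0, W j = W 0 := by
  have pos : ∀ a b, (2 * a + 1).natAbs + (2 * b + 1).natAbs ≤ N → a ≠ b → 1 ≤ a → 1 ≤ b →
      W a = W b → ∃ j ≠ 0, W j = W 0 := by
    intro a b hN hab ha hb h
    rcases hW.eq_or_rel_of_eq hR h with h' | h'
    · exact IH (a - 1) (b - 1) (by omega) (Or.inl ⟨by omega, h'⟩)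
    · exact IH (-a) (b - 1) (by omega) (Or.inr ⟨by omega, Or.inl (by omega), h'⟩)
  have hflip := hW.flip_eq_flip h
  rcases (by omega : a = 0 ∨ a = -1 ∨ b = 0 ∨ b = -1 ∨ (1 ≤ a ∧ 1 ≤ b) ∨ (a ≤ -2 ∧ b ≤ -2) ∨
    (1 ≤ a ∧ b ≤ -2) ∨ (a ≤ -2 ∧ 1 ≤ b)) with ha | ha | hb | hb | ⟨ha, hb⟩ | ⟨ha, hb⟩ |
    ⟨ha, hb⟩ | ⟨ha, hb⟩
  · exact hW.exists_of_eq_center hab h (Or.inl ha)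
  · exact hW.exists_of_eq_center hab h (Or.inr ha)
  · exact hW.exists_of_eq_center hab.symm h.symm (Or.inl hb)
  · exact hW.exists_of_eq_center hab.symm h.symm (Or.inr hb)
  · exact pos a b hN hab ha hb h
  · exact pos (-1 - a) (-1 - b) (by omega) (by omega) (by omega) (by omega) hflip
  · rcases le_or_gt a (-1 - b) with hab' | hab'
    · exact hW.exists_of_eq_across hR IH ha hN hab' h
    · exact hW.exists_of_eq_across hR IH (by omega) (by omega) (by omega) hflip.symm
  · rcases le_or_gt b (-1 - a) with hab' | hab'
    · exact hW.exists_of_eq_across hR IH hb (by omega) hab' h.symm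
    · exact hW.exists_of_eq_across hR IH (by omega) (by omega) (by omega) hflip

theorem exists_of_isLink (hR : IsReversible σ R) (hW : IsPalindromicWalk σ R W) {a b : ℤ}
    (h : IsLink R W a b) : ∃ j ≠ 0, W j = W 0 := by
  induction hN : (2 * a + 1).natAbs + (2 * b + 1).natAbs using Nat.strong_induction_on
    generalizing a b with
  | _ N IH =>
    have IH' : ∀ a b, (2 * a + 1).natAbs + (2 * b + 1).natAbs < N → IsLink R W a b →
        ∃ j ≠ 0, W j = W 0 := fun a b hlt h => IH _ hlt h rfl
    rcases h with ⟨hab, h⟩ | ⟨hab, hsign, h⟩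
    · exact hW.exists_of_eq hR IH' hN.le hab h
    · exact hW.exists_of_rel hR IH' hN.le hab hsign h

theorem exists_pos_eq_zero (hR : IsReversible σ R) (hW : IsPalindromicWalk σ R W) {a b : ℤ}
    (hab : a ≠ b) (h : W a = W b) : ∃ j, 0 < j ∧ W j = W 0 := by
  obtain ⟨j, hj, hWj⟩ := hW.exists_of_isLink hR (Or.inl ⟨hab, h⟩)
  rcases hj.lt_or_gt with hj | hj
  · refine ⟨-j, by omega, ?_⟩
    have := hW.eq_zero_of_eq_neg_one (a := -1 - j) (by simpa using hW.flip_eq_flip hWj)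
    rwa [show -1 - j + 1 = -j by ring] at this
  · exact ⟨j, hj, hWj⟩

end IsPalindromicWalk

theorem IsReversible.exists_pos_eq_zero (hR : IsReversible σ R) {w : ℕ → S}
    (hw : ∀ i, R (w i) (w (i + 1))) (h0 : ∀ y, R (σ (w 0)) y ↔ y = w 0)
    (hfin : (Set.range w).Finite) : ∃ i, 0 < i ∧ w i = w 0 := by
  set W : ℤ → S := fun j => if 0 ≤ j then w j.toNat else σ (w (-1 - j).toNat)
  have hWnat : ∀ i : ℕ, W i = w i := fun i => by simp [W]
  have hWneg : ∀ i : ℕ, W (-1 - i) = σ (w i) := fun i => by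
    simp only [W, if_neg (by omega : ¬ 0 ≤ -1 - (i : ℤ))]
    congr; omega
  have hW0 : W 0 = w 0 := hWnat 0
  have hWm1 : W (-1) = σ (w 0) := by simpa using hWneg 0
  have hW : IsPalindromicWalk σ R W := by
    refine ⟨fun j => ?_, fun j => ?_, fun y hy => ?_⟩
    · rcases lt_trichotomy j (-1) with hj | rfl | hj
      · obtain ⟨i, rfl⟩ : ∃ i : ℕ, j = -1 - (i + 1 : ℕ) := ⟨(-2 - j).toNat, by omega⟩
        rw [show -1 - ((i + 1 : ℕ) : ℤ) + 1 = -1 - i by push_cast; ring, hWneg, hWneg]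
        exact hR.reverse (hw i)
      · simpa [hWm1, hW0] using (h0 (w 0)).2 rfl
      · lift j to ℕ using (by omega)
        rw [hWnat, ← Nat.cast_succ, hWnat]
        exact hw j
    · rcases le_or_gt 0 j with hj | hj
      · lift j to ℕ using hj
        exact hWneg j
      · obtain ⟨i, rfl⟩ : ∃ i : ℕ, j = -1 - i := ⟨(-1 - j).toNat, by omega⟩
        rw [hWneg, hR.involutive, sub_sub_cancel, hWnat]
    · rw [hW0]; exact (h0 y).1 (hWm1 ▸ hy)
  obtain ⟨a, b, hab, hw_eq⟩ := hfin.exists_lt_map_eq_of_forall_mem (f := w) Set.mem_range_self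
  obtain ⟨j, hj, hWj⟩ := hW.exists_pos_eq_zero hR (a := a) (b := b) (by omega)
    (by rw [hWnat, hWnat, hw_eq])
  lift j to ℕ using hj.le
  exact ⟨j, by omega, by rwa [hWnat, hW0] at hWj⟩

end ReversibleWalk

namespace IsBest

variable {n k m : ℤ}

theorem two_mul_le_s13 (h : IsBest n k m) (hk : 0 < k) (hm : 0 < m) :
    2 * n ≤ m ^ 2 + (m + k) ^ 2 := by
  have hcmp := h (m + k) (by linarith) Int.add_modEq_right
  rcases abs_cases (m ^ 2 - n) with ⟨h1, h1'⟩ | ⟨h1, h1'⟩ <;>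
    rcases abs_cases ((m + k) ^ 2 - n) with ⟨h2, h2'⟩ | ⟨h2, h2'⟩ <;> nlinarith

theorem le_two_mul_s13 (h : IsBest n k m) (hk : 0 < k) (hkm : k < m) :
    (m - k) ^ 2 + m ^ 2 ≤ 2 * n := by
  have hcmp := h (m - k) (by linarith) (Int.modEq_iff_dvd.2 ⟨1, by ring⟩)
  have hsq : (m - k) ^ 2 < m ^ 2 := pow_lt_pow_left₀ (by linarith) (by linarith) two_ne_zero
  rcases abs_cases (m ^ 2 - n) with ⟨h1, h1'⟩ | ⟨h1, h1'⟩ <;>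
    rcases abs_cases ((m - k) ^ 2 - n) with ⟨h2, h2'⟩ | ⟨h2, h2'⟩ <;> nlinarith

theorem of_one (h : IsBest n 1 m) (k : ℤ) : IsBest n k m :=
  fun m' hm' _ => h m' hm' Int.modEq_one

-- `|y ^ 2 - n|` decreases and then increases along `y > 0`, so the neighbours `m ± k` decide.
theorem of_two_mul_le (hk : 0 < k) (hm : 0 < m) (hlo : 2 * n ≤ m ^ 2 + (m + k) ^ 2)
    (hhi : k < m → (m - k) ^ 2 + m ^ 2 ≤ 2 * n) : IsBest n k m := by
  intro y hy hym
  obtain ⟨t, ht⟩ := Int.modEq_iff_dvd.1 hym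
  rcases lt_trichotomy t 0 with ht0 | rfl | ht0
  · have hy' : m + k ≤ y := by nlinarith
    have hsq : (m + k) ^ 2 ≤ y ^ 2 := pow_le_pow_left₀ (by linarith) hy' 2
    rcases abs_cases (m ^ 2 - n) with ⟨h1, h1'⟩ | ⟨h1, h1'⟩ <;>
      rcases abs_cases (y ^ 2 - n) with ⟨h2, h2'⟩ | ⟨h2, h2'⟩ <;> nlinarith
  · obtain rfl : y = m := by linarith
    exact le_rfl
  · have hy' : y ≤ m - k := by nlinarith
    have hhi := hhi (by linarith)
    have hsq : y ^ 2 ≤ (m - k) ^ 2 := pow_le_pow_left₀ hy.le hy' 2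
    rcases abs_cases (m ^ 2 - n) with ⟨h1, h1'⟩ | ⟨h1, h1'⟩ <;>
      rcases abs_cases (y ^ 2 - n) with ⟨h2, h2'⟩ | ⟨h2, h2'⟩ <;> nlinarith

theorem twin {u w : ℤ} (hu : IsBest n k u) (hw : IsBest n k w) (hk : 0 < k) (hu0 : 0 < u)
    (huw : u ≡ w [ZMOD k]) (hlt : u < w) : w = u + k ∧ u ^ 2 + w ^ 2 = 2 * n := by
  obtain ⟨t, ht⟩ := Int.modEq_iff_dvd.1 huw
  have ht1 : 1 ≤ t := by nlinarith
  have hlo := hu.two_mul_le_s13 hk hu0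
  have hhi := hw.le_two_mul_s13 hk (by nlinarith)
  have ht1 : t = 1 := by
    by_contra hne
    have : u + 2 * k ≤ w := by nlinarith [show 2 ≤ t by omega]
    nlinarith
  subst ht1
  constructor <;> nlinarith

-- Modulo `1` there are no ties: the sum of two consecutive squares is odd.
theorem eq_of_one {u w : ℤ} (hu : IsBest n 1 u) (hw : IsBest n 1 w) (hu0 : 0 < u) (hw0 : 0 < w) :
    u = w := by
  wlog hlt : u < w generalizing u w
  · rcases (not_lt.1 hlt).lt_or_eq with hlt | rfl
    · exact (this hw hu hw0 hu0 hlt).symm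
    · rfl
  obtain ⟨rfl, hsq⟩ := hu.twin hw one_pos hu0 Int.modEq_one hlt
  have : 2 * (u ^ 2 + u - n) = -1 := by linear_combination hsq
  omega

end IsBest

section Reduced

variable {n a b m : ℤ}

theorem IsBest.sq_sub_add_sq_le (h : IsBest n a m) (ha : 0 < a) (hm : 0 < m)
    (hab : a * b = |m ^ 2 - n|) (ha2 : a ^ 2 < n) : (m - b) ^ 2 + b ^ 2 ≤ n := by
  rcases abs_cases (m ^ 2 - n) with ⟨h1, h1'⟩ | ⟨h1, h1'⟩ <;> rw [h1] at hab
  · have ham : a < m := by nlinarith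
    have := h.le_two_mul_s13 ha ham
    have : a + 2 * b ≤ 2 * m := le_of_mul_le_mul_left (by nlinarith) ha
    nlinarith
  · have := h.two_mul_le_s13 ha hm
    have : 2 * b ≤ a + 2 * m := le_of_mul_le_mul_left (by nlinarith) ha
    nlinarith

theorem isBest_of_sq_sub_add_sq_le (ha : 0 < a) (hb : 0 < b) (hm : 0 < m)
    (hab : a * b = |m ^ 2 - n|) (h : (m - b) ^ 2 + b ^ 2 ≤ n) : IsBest n a m := by
  apply IsBest.of_two_mul_le ha hm
  all_goals rcases abs_cases (m ^ 2 - n) with ⟨h1, h1'⟩ | ⟨h1, h1'⟩ <;> rw [h1] at hab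
  · nlinarith
  · have : 2 * b ≤ a + 2 * m := le_of_mul_le_mul_left (by nlinarith) hb
    nlinarith
  · intro ham
    have : a + 2 * b ≤ 2 * m := le_of_mul_le_mul_left (by nlinarith) hb
    nlinarith
  · intro ham
    have : (m - a) ^ 2 < m ^ 2 := pow_lt_pow_left₀ (by linarith) (by linarith) two_ne_zero
    nlinarith

theorem sq_sub_add_sq_le_of_dvd_add {m' : ℤ} (hb : 0 < b) (hm' : 0 < m') (hbest : IsBest n b m')
    (hdvd : b ∣ m + m') (h : (m - b) ^ 2 + b ^ 2 ≤ n) : (m' - b) ^ 2 + b ^ 2 ≤ n := by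
  obtain ⟨j, hj⟩ := hdvd
  have hlo := hbest.two_mul_le_s13 hb hm'
  rcases lt_trichotomy j 2 with hj2 | rfl | hj2
  · -- `b ≤ 2 m'` gives `|m' - b| ≤ m' ≤ b - m = |m - b|`
    have : m + m' ≤ b := by nlinarith [show j ≤ 1 by omega]
    have : b ≤ 2 * m' := by nlinarith
    nlinarith
  · nlinarith
  · have : 3 * b ≤ m + m' := by nlinarith [show 3 ≤ j by omega]
    rcases le_or_gt m' b with hm'b | hm'b
    · nlinarith
    · have hhi := hbest.le_two_mul_s13 hb hm'b
      rcases le_or_gt b (2 * (m' - b)) with h2 | h2 <;> nlinarith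

end Reduced

/-- In a run, `(a, m, b) = (kᵢ, mᵢ, kᵢ₊₁)`. -/
def IsBestTriple (n a m b : ℤ) : Prop :=
  0 < a ∧ 0 < m ∧ 0 < b ∧ a * b = |m ^ 2 - n| ∧ IsBest n a m ∧ IsBest n b m

namespace IsBestTriple

variable {n a m b : ℤ}

theorem symm (h : IsBestTriple n a m b) : IsBestTriple n b m a := by
  obtain ⟨ha, hm, hb, hab, h1, h2⟩ := h
  exact ⟨hb, hm, ha, by rw [mul_comm, hab], h2, h1⟩

theorem twin {m' c c' : ℤ} (h : IsBestTriple n b m c) (h' : IsBestTriple n b m' c')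
    (hmod : m ≡ m' [ZMOD b]) (hne : m ≠ m') : c = c' ∧ m + m' = 2 * c := by
  wlog hlt : m < m' generalizing m m' c c'
  · obtain ⟨hcc, hsum⟩ := this h' h hmod.symm hne.symm (by omega)
    exact ⟨hcc.symm, by omega⟩
  obtain ⟨hb, hm, -, hbc, hbest, -⟩ := h
  obtain ⟨-, -, -, hbc', hbest', -⟩ := h'
  obtain ⟨rfl, hsq⟩ := hbest.twin hbest' hb hm hmod hlt
  have hpos : 0 < n - m ^ 2 := by nlinarith
  rw [abs_of_neg (by linarith)] at hbc
  rw [abs_of_pos (by nlinarith)] at hbc'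
  constructor
  · exact mul_left_cancel₀ hb.ne' (by linarith)
  · exact (mul_left_cancel₀ hb.ne' (by nlinarith) : m + (m + b) = 2 * c)

theorem eq_of_one {m' c : ℤ} (h : IsBestTriple n 1 m b) (h' : IsBestTriple n 1 m' c) :
    m' = m ∧ c = b := by
  obtain ⟨-, hm, -, hb, hbest, -⟩ := h
  obtain ⟨-, hm', -, hc, hbest', -⟩ := h'
  obtain rfl := hbest'.eq_of_one hbest hm' hm
  exact ⟨rfl, by linarith⟩

theorem next {m' c : ℤ} (hns : ¬ IsSquare n) (h : IsBestTriple n a m b) (ha2 : a ^ 2 < n)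
    (hm' : 0 < m') (hc : 0 < c) (hbc : b * c = |m' ^ 2 - n|) (hbest : IsBest n b m')
    (hmod : m' ≡ -m [ZMOD b]) : IsBestTriple n b m' c ∧ b ^ 2 < n := by
  obtain ⟨ha, hm, hb, hab, hbest_a, -⟩ := h
  have hred := hbest_a.sq_sub_add_sq_le ha hm hab ha2
  have hdvd : b ∣ m + m' := dvd_neg.1 (by rw [neg_add']; exact hmod.dvd)
  have hred' := sq_sub_add_sq_le_of_dvd_add hb hm' hbest hdvd hred
  refine ⟨⟨hb, hm', hc, hbc, hbest, isBest_of_sq_sub_add_sq_le hc hb hm' ?_ hred'⟩, ?_⟩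
  · rwa [mul_comm]
  · exact lt_of_le_of_ne (by nlinarith [sq_nonneg (m - b)]) fun h => hns ⟨b, by rw [← h]; ring⟩

theorem mem_Icc (h : IsBestTriple n a m b) (ha2 : a ^ 2 < n) (hb2 : b ^ 2 < n) :
    (a, m, b) ∈ Set.Icc (1, 1, 1) (n, 2 * n, n) := by
  obtain ⟨ha, hm, hb, hab, hbest, -⟩ := h
  have hred := hbest.sq_sub_add_sq_le ha hm hab ha2
  simp only [Set.mem_Icc, Prod.mk_le_mk]
  refine ⟨⟨by omega, by omega, by omega⟩, ⟨by nlinarith, ?_, by nlinarith⟩⟩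
  nlinarith [sq_nonneg (m - b - 1)]

end IsBestTriple

namespace Chakravala

def Step (n : ℤ) : ℤ × ℤ × ℤ → ℤ × ℤ × ℤ → Prop
  | (a, m, b), (b', m', c) =>
    IsBestTriple n a m b ∧ IsBestTriple n b' m' c ∧ b' = b ∧ m' ≡ -m [ZMOD b]

def reverse : ℤ × ℤ × ℤ → ℤ × ℤ × ℤ
  | (a, m, b) => (b, m, a)

theorem isReversible (n : ℤ) : IsReversible reverse (Step n) where
  involutive := fun _ => rfl
  reverse := by
    rintro ⟨a, m, b⟩ ⟨b', m', c⟩ ⟨h, h', rfl, hmod⟩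
    exact ⟨h'.symm, h.symm, rfl, by simpa using hmod.neg.symm⟩
  fork := by
    rintro ⟨a, m, b⟩ ⟨b₁, m₁, c₁⟩ ⟨b₂, m₂, c₂⟩ ⟨-, h₁, rfl, hmod₁⟩ ⟨-, h₂, rfl, hmod₂⟩ hne
    have hm : m₁ ≠ m₂ := by
      rintro rfl
      obtain ⟨hb, -, -, hc₁, -⟩ := h₁
      obtain ⟨-, -, -, hc₂, -⟩ := h₂
      exact hne (by rw [mul_left_cancel₀ hb.ne' (hc₁.trans hc₂.symm)])
    obtain ⟨rfl, hsum⟩ := h₁.twin h₂ (hmod₁.trans hmod₂.symm) hm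
    exact ⟨h₁, h₂.symm, rfl, Int.modEq_iff_dvd.2 ⟨-2, by linarith⟩⟩

theorem step_reverse_iff {n m b : ℤ} (h : IsBestTriple n 1 m b) (y : ℤ × ℤ × ℤ) :
    Step n (reverse (1, m, b)) y ↔ y = (1, m, b) := by
  constructor
  · obtain ⟨b', m', c⟩ := y
    rintro ⟨-, h', rfl, -⟩
    obtain ⟨rfl, rfl⟩ := h.eq_of_one h'
    rfl
  · rintro rfl
    exact ⟨h.symm, h, rfl, Int.modEq_one⟩

end Chakravala

theorem stmt_13_general (n : ℤ) (hn : 0 < n) (hns : ¬ IsSquare n)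
    (k m : ℕ → ℤ)
    (hk0 : k 0 = 1)
    (hkpos : ∀ i, 0 < k i)
    (hmpos : ∀ i, 0 < m i)
    (hcong : ∀ i, m (i + 1) ≡ -(m i) [ZMOD k (i + 1)])
    (hbest : ∀ i, IsBest n (k i) (m i))
    (hrec : ∀ i, k i * k (i + 1) = |m i ^ 2 - n|) :
    ∃ i, 1 ≤ i ∧ k i = 1 := by
  have hrun : ∀ i, IsBestTriple n (k i) (m i) (k (i + 1)) ∧ k i ^ 2 < n := by
    intro i
    induction i with
    | zero =>
      have hn1 : 1 < n := lt_of_le_of_ne hn fun h => hns ⟨1, by rw [← h]; norm_num⟩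
      have hbest0 := hbest 0
      rw [hk0] at hbest0 ⊢
      exact ⟨⟨one_pos, hmpos 0, hkpos 1, hk0 ▸ hrec 0, hbest0, hbest0.of_one _⟩, by simpa⟩
    | succ i ih =>
      exact ih.1.next hns ih.2 (hmpos _) (hkpos _) (hrec _) (hbest _) (hcong i)
  have hfin : (Set.range fun i => (k i, m i, k (i + 1))).Finite :=
    (Set.finite_Icc (1, 1, 1) (n, 2 * n, n)).subset <| by
      rintro _ ⟨i, rfl⟩
      exact (hrun i).1.mem_Icc (hrun i).2 (hrun (i + 1)).2
  obtain ⟨i, hi, heq⟩ := (Chakravala.isReversible n).exists_pos_eq_zero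
    (fun i => ⟨(hrun i).1, (hrun (i + 1)).1, rfl, hcong i⟩)
    (by rw [hk0]; exact Chakravala.step_reverse_iff (hk0 ▸ (hrun 0).1)) hfin
  exact ⟨i, hi, by simpa [hk0] using congrArg Prod.fst heq⟩

/-- Halting property of the chakravala algorithm: no infinite run avoids `k i = 1`.
Here `m (-1) := 0` is encoded by the hypothesis `hcong0`. -/
theorem stmt_13 (n : ℤ) (hn : 0 < n) (hns : ¬ IsSquare n)
    (k m : ℕ → ℤ)
    (hk0 : k 0 = 1)
    (hkpos : ∀ i, 0 < k i)
    (hmpos : ∀ i, 0 < m i)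
    (hcong0 : m 0 ≡ -(0 : ℤ) [ZMOD k 0])
    (hcong : ∀ i, m (i + 1) ≡ -(m i) [ZMOD k (i + 1)])
    (hbest : ∀ i, IsBest n (k i) (m i))
    (hrec : ∀ i, k i * k (i + 1) = |m i ^ 2 - n|) :
    ∃ i, 1 ≤ i ∧ k i = 1 :=
  stmt_13_general n hn hns k m hk0 hkpos hmpos hcong hbest hrec
end

section
/- Let n be a nonsquare positive integer, and let k, m be positive integers with k² < n and m best mod k. Then either m² < n < (m + k)², or k < m and (m − k)² < n < m². (In other words, a best element mod k is one of the two members of its congruence class nearest to √n.) -/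
/-!
Squares increase along the positive members of a residue class. If `m² < n`, a best `m` can
therefore not have `(m + k)²` still at most `n`, since `m + k` would be strictly closer to `√n`;
symmetrically, if `n < m²` then `m - k` must be positive and `(m - k)²` below `n`. As `n` is not a
square, one of `m² < n` and `n < m²` holds.
-/

namespace IsBest

variable {n k m : ℤ}

theorem lt_add_sq_of_sq_le (hbest : IsBest n k m) (hk : 0 < k) (hm : 0 < m) (hmn : m ^ 2 ≤ n) :
    n < (m + k) ^ 2 := by
  by_contra! hle
  have hcloser := hbest (m + k) (by positivity) Int.add_modEq_right
  rw [abs_of_nonpos (by linarith), abs_of_nonpos (by linarith)] at hcloser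
  nlinarith

theorem sub_sq_lt_of_le_sq (hbest : IsBest n k m) (hk : 0 < k) (hkm : k < m) (hnm : n ≤ m ^ 2) :
    (m - k) ^ 2 < n := by
  by_contra! hle
  have hcong : m - k ≡ m [ZMOD k] := (Int.modEq_sub_modulus_iff.mpr (Int.ModEq.refl m)).symm
  have hcloser := hbest (m - k) (by linarith) hcong
  rw [abs_of_nonneg (by linarith), abs_of_nonneg (by linarith)] at hcloser
  nlinarith

end IsBest

theorem stmt_15_general (n k m : ℤ) (hns : ¬ IsSquare n)
    (hk : 0 < k) (hm : 0 < m) (hkn : k ^ 2 < n) (hbest : IsBest n k m) :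
    (m ^ 2 < n ∧ n < (m + k) ^ 2) ∨ (k < m ∧ (m - k) ^ 2 < n ∧ n < m ^ 2) := by
  have hne : m ^ 2 ≠ n := fun h => hns ⟨m, by rw [← h, sq]⟩
  rcases hne.lt_or_gt with hlt | hgt
  · exact Or.inl ⟨hlt, hbest.lt_add_sq_of_sq_le hk hm hlt.le⟩
  · have hkm : k < m := lt_of_pow_lt_pow_left₀ 2 hm.le (hkn.trans hgt)
    exact Or.inr ⟨hkm, hbest.sub_sq_lt_of_le_sq hk hkm hgt.le, hgt⟩

theorem stmt_15 (n k m : ℤ) (hn : 0 < n) (hns : ¬ IsSquare n)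
    (hk : 0 < k) (hm : 0 < m) (hkn : k ^ 2 < n) (hbest : IsBest n k m) :
    (m ^ 2 < n ∧ n < (m + k) ^ 2) ∨ (k < m ∧ (m - k) ^ 2 < n ∧ n < m ^ 2) :=
  stmt_15_general n k m hns hk hm hkn hbest
end

section
/- Let n be a positive integer and let a, b, m be integers and k a positive integer such that k = |a² − n·b²|, k divides a + m·b, and k divides m² − n. Set b' = (a + m·b)/k and a' = (a·m + n·b)/k (an integer). Then |a·b' − b·a'| = 1 (so in particular a' and b' are coprime), and k²·(a'² − n·b'²) = (m² − n)·(a² − n·b²), so that |a'² − n·b'²| = |m² − n|/k. -/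
/-!
Write `N = a² - n b²`. Substituting `k b' = a + m b` and `k a' = a m + n b` gives the two
polynomial identities `k (a b' - b a') = N` and `k² (a'² - n b'²) = (m² - n) N`
(the second is Brahmagupta's composition of `(a, b)` with `(m, 1)`).
Since `k = |N| > 0`, the first forces `|a b' - b a'| = 1`, which is a Bézout relation for
`a', b'`, and dividing the absolute value of the second by `k` gives the last claim.
-/

section CommRing

variable {R : Type*} [CommRing R] {n a b m k a' b' : R}

theorem chakravala_mul_cross (hb' : k * b' = a + m * b) (ha' : k * a' = a * m + n * b) :
    k * (a * b' - b * a') = a ^ 2 - n * b ^ 2 := by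
  linear_combination a * hb' - b * ha'

theorem chakravala_sq_mul_norm (hb' : k * b' = a + m * b) (ha' : k * a' = a * m + n * b) :
    k ^ 2 * (a' ^ 2 - n * b' ^ 2) = (m ^ 2 - n) * (a ^ 2 - n * b ^ 2) := by
  linear_combination (k * a' + a * m + n * b) * ha' - n * (k * b' + a + m * b) * hb'

theorem isCoprime_of_isUnit_mul_sub_mul (h : IsUnit (a * b' - b * a')) : IsCoprime a' b' := by
  obtain ⟨u, hu⟩ := h
  exact ⟨-(↑u⁻¹ * b), ↑u⁻¹ * a, by linear_combination (↑u⁻¹ : R) * hu.symm + u.inv_mul⟩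

end CommRing

section LinearOrder

variable {R : Type*} [CommRing R] [LinearOrder R] [IsStrictOrderedRing R] {k d N : R}

theorem abs_eq_one_of_mul_eq_of_eq_abs (hk : 0 < k) (hkN : k = |N|) (h : k * d = N) :
    |d| = 1 := by
  have h' := congrArg abs h
  rw [abs_mul, abs_of_pos hk, ← hkN] at h'
  exact (mul_eq_left₀ hk.ne').mp h'

theorem mul_abs_eq_of_sq_mul_eq_mul_of_eq_abs {M X : R} (hk : 0 < k) (hkN : k = |N|)
    (h : k ^ 2 * X = M * N) : k * |X| = |M| := by
  have h' := congrArg abs h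
  rw [abs_mul, abs_mul, abs_pow, abs_of_pos hk, ← hkN, sq, mul_assoc, mul_comm |M|] at h'
  exact mul_left_cancel₀ hk.ne' h'

end LinearOrder

theorem stmt_17_general (n a b m k a' b' : ℤ) (hk : 0 < k)
    (hkdef : k = |a ^ 2 - n * b ^ 2|)
    (hb' : k * b' = a + m * b) (ha' : k * a' = a * m + n * b) :
    |a * b' - b * a'| = 1 ∧ IsCoprime a' b' ∧
    k ^ 2 * (a' ^ 2 - n * b' ^ 2) = (m ^ 2 - n) * (a ^ 2 - n * b ^ 2) ∧
    k * |a' ^ 2 - n * b' ^ 2| = |m ^ 2 - n| := by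
  have hcross : |a * b' - b * a'| = 1 :=
    abs_eq_one_of_mul_eq_of_eq_abs hk hkdef (chakravala_mul_cross hb' ha')
  have hnorm := chakravala_sq_mul_norm hb' ha'
  exact ⟨hcross, isCoprime_of_isUnit_mul_sub_mul (Int.isUnit_iff_abs_eq.mpr hcross), hnorm,
    mul_abs_eq_of_sq_mul_eq_mul_of_eq_abs hk hkdef hnorm⟩

theorem stmt_17 (n a b m k a' b' : ℤ) (hn : 0 < n) (hk : 0 < k)
    (hkdef : k = |a ^ 2 - n * b ^ 2|)
    (h1 : k ∣ a + m * b) (h2 : k ∣ m ^ 2 - n)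
    (hb' : k * b' = a + m * b) (ha' : k * a' = a * m + n * b) :
    |a * b' - b * a'| = 1 ∧ IsCoprime a' b' ∧
    k ^ 2 * (a' ^ 2 - n * b' ^ 2) = (m ^ 2 - n) * (a ^ 2 - n * b ^ 2) ∧
    k * |a' ^ 2 - n * b' ^ 2| = |m ^ 2 - n| :=
  stmt_17_general n a b m k a' b' hk hkdef hb' ha'
end
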